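/- arXiv:1612.07648 — 13 statements merged into one kernel-verified Lean document; each statement's English description precedes it below -/
import Mathlib

section
/- Let A be a set, f, g : A → A, and suppose every equivalence relation on A preserved by f is also preserved by g. If B ⊆ A is closed under f, then either B is closed under g, or g is constant on B with the constant value lying outside B. -/
/-- `f` preserves the equivalence relation (setoid) `κ`. -/
def Preserves {A : Type*} (f : A → A) (κ : Setoid A) : Prop :=
  ∀ x y : A, κ.r x y → κ.r (f x) (f y)

theorem lemma_A2_ii {A : Type*} (f g : A → A)
    (h : ∀ κ : Setoid A, Preserves f κ → Preserves g κ)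
    (B : Set A) (hB : ∀ x ∈ B, f x ∈ B) :
    (∀ x ∈ B, g x ∈ B) ∨ (∃ c, c ∉ B ∧ ∀ x ∈ B, g x = c) := by
  set κ : Setoid A :=
    ⟨fun a b => a = b ∨ (a ∈ B ∧ b ∈ B),
     ⟨fun a => Or.inl rfl,
      fun hab => hab.imp Eq.symm And.symm,
      fun hab hbc => by
        rcases hab with rfl | ⟨ha, hb⟩
        · exact hbc
        · rcases hbc with rfl | ⟨_, hc⟩
          · exact Or.inr ⟨ha, hb⟩
          · exact Or.inr ⟨ha, hc⟩⟩⟩ with hκ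
  have hf : Preserves f κ := by
    intro x y hxy
    rcases hxy with rfl | ⟨hx, hy⟩
    · exact Or.inl rfl
    · exact Or.inr ⟨hB x hx, hB y hy⟩
  have hg := h κ hf
  by_cases hc : ∀ x ∈ B, g x ∈ B
  · exact Or.inl hc
  · push_neg at hc
    obtain ⟨x, hx, hgx⟩ := hc
    refine Or.inr ⟨g x, hgx, fun y hy => ?_⟩
    have := hg y x (Or.inr ⟨hy, hx⟩)
    rcases this with h' | ⟨_, h2⟩
    · exact h'
    · exact absurd h2 hgx
end

section
/- Let φ : L → E be a surjective meet-homomorphism between finite lattices with φ(1_L) = 1_E. If m ∈ E is meet-irreducible, then φ⁻¹(m) is nonempty, and every maximal element q of φ⁻¹(m) is meet-irreducible in L. -/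
theorem residual_preimage_infIrred
    {L E : Type*} [Lattice L] [Fintype L] [OrderTop L]
    [Lattice E] [Fintype E] [OrderTop E]
    (φ : L → E) (hsurj : Function.Surjective φ)
    (hmeet : ∀ a b : L, φ (a ⊓ b) = φ a ⊓ φ b) (htop : φ ⊤ = ⊤)
    (m : E) (hm : InfIrred m) :
    (∃ q : L, φ q = m) ∧
      ∀ q : L, φ q = m → (∀ q' : L, φ q' = m → q ≤ q' → q' = q) → InfIrred q := by
  refine ⟨hsurj m, fun q hq hmax => ?_⟩
  constructor
  · intro hq'
    have hqt : q = ⊤ := top_le_iff.mp (hq' le_top)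
    exact hm.1 (by rw [hqt, htop] at hq; rw [← hq]; exact isMax_top)
  · intro b c hbc
    have : φ b ⊓ φ c = m := by rw [← hmeet, hbc, hq]
    rcases hm.2 this with h | h
    · left; exact hmax b h (hbc ▸ inf_le_left)
    · right; exact hmax c h (hbc ▸ inf_le_right)
end

section
/- Let φ : L → E be a surjective meet-homomorphism between finite lattices with φ(1_L) = 1_E. Let m ∈ E be such that every q ∈ L with φ(q) = m is meet-irreducible in L. Then m is meet-irreducible in E. -/
theorem residual_image_infIrred
    {L E : Type*} [Lattice L] [Fintype L] [OrderTop L]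
    [Lattice E] [Fintype E] [OrderTop E]
    (φ : L → E) (hsurj : Function.Surjective φ)
    (hmeet : ∀ a b : L, φ (a ⊓ b) = φ a ⊓ φ b) (htop : φ ⊤ = ⊤)
    (m : E) (hirr : ∀ q : L, φ q = m → InfIrred q) :
    InfIrred m := by
  constructor
  · intro hmax
    have hm : m = ⊤ := top_le_iff.mp (hmax le_top)
    have := (hirr ⊤ (by rw [htop, hm])).1
    exact this isMax_top
  · intro b c hbc
    obtain ⟨u, hu⟩ := hsurj b
    obtain ⟨v, hv⟩ := hsurj c
    have huv : φ (u ⊓ v) = m := by rw [hmeet, hu, hv, hbc]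
    rcases (hirr _ huv).2 rfl with h | h
    · left; rw [← hu, h, huv]
    · right; rw [← hv, h, huv]
end

section
/- Let φ : L → E be a surjective meet-homomorphism between finite lattices with φ(1_L) = 1_E. Assume (†) φ(x) = 1_E implies x = 1_L, and (‡) for all coatoms q, q' of L, φ(q) ≤ φ(q') implies φ(q) = φ(q'). Then φ(q) is a coatom of E for every coatom q of L, and the set of coatoms of E equals {φ(q) : q a coatom of L}. -/
theorem residual_coatoms
    {L E : Type*} [Lattice L] [Fintype L] [OrderTop L]
    [Lattice E] [Fintype E] [OrderTop E]
    (φ : L → E) (hsurj : Function.Surjective φ)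
    (hmeet : ∀ a b : L, φ (a ⊓ b) = φ a ⊓ φ b) (htop : φ ⊤ = ⊤)
    (hdag : ∀ x : L, φ x = ⊤ → x = ⊤)
    (hddag : ∀ q q' : L, IsCoatom q → IsCoatom q' → φ q ≤ φ q' → φ q = φ q') :
    (∀ q : L, IsCoatom q → IsCoatom (φ q)) ∧
      {m : E | IsCoatom m} = {m : E | ∃ q : L, IsCoatom q ∧ m = φ q} := by
  have hmono : Monotone φ := fun a b hab => by
    have : φ (a ⊓ b) = φ a := by rw [inf_eq_left.mpr hab]
    rw [hmeet] at this
    exact inf_eq_left.mp this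
  have hcoat : ∀ x : L, x ≠ ⊤ → ∃ q : L, IsCoatom q ∧ x ≤ q := fun x hx => by
    rcases (IsCoatomic.eq_top_or_exists_le_coatom x) with h | h
    · exact absurd h hx
    · exact h
  have h1 : ∀ q : L, IsCoatom q → IsCoatom (φ q) := by
    intro q hq
    constructor
    · intro h
      exact hq.1 (hdag q h)
    · intro b hb
      by_contra hbt
      obtain ⟨x, rfl⟩ := hsurj b
      have hx : x ≠ ⊤ := fun h => hbt (h ▸ htop)
      obtain ⟨q', hq', hxq'⟩ := hcoat x hx
      have hle : φ q ≤ φ q' := le_trans hb.le (hmono hxq')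
      have hlt : φ q < φ q' := lt_of_lt_of_le hb (hmono hxq')
      exact hlt.ne (hddag q q' hq hq' hle)
  refine ⟨h1, Set.ext fun m => ⟨fun hm => ?_, fun ⟨q, hq, hmq⟩ => hmq ▸ h1 q hq⟩⟩
  obtain ⟨x, rfl⟩ := hsurj m
  have hx : x ≠ ⊤ := fun h => hm.1 (h ▸ htop)
  obtain ⟨q, hq, hxq⟩ := hcoat x hx
  have hle : φ x ≤ φ q := hmono hxq
  rcases hle.lt_or_eq with hlt | heq
  · exact absurd (hm.2 _ hlt) (h1 q hq).1
  · exact ⟨q, hq, heq⟩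
end

section
/- Let A be a finite set with |A| ≥ 3 and let f : A → A be a transposition (swapping two distinct elements 0 and 1 and fixing all others). Then the congruence lattice Con(A,f) is meet-reducible in the lattice 𝓔 of all congruence lattices on A: there exist functions g₀, g₁ : A → A with Con(A,f) ⊊ Con(A,gᵢ) for i = 0,1 and Con(A,f) = Con(A,g₀) ∩ Con(A,g₁). Concretely, g₀ maps both 0 and 1 to 0 and fixes all other elements, g₁ maps both 0 and 1 to 1 and fixes all other elements. -/
/-- The congruence lattice of `(A,f)`: the set of equivalence relations preserved by `f`. -/
def ConOf {A : Type*} (f : A → A) : Set (Setoid A) :=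
  {κ | ∀ x y : A, κ.r x y → κ.r (f x) (f y)}

/-- The setoid whose only nontrivial class is `{u, v}`. -/
def pairSetoid {A : Type*} (u v : A) : Setoid A :=
  ⟨fun x y => x = y ∨ (x = u ∧ y = v) ∨ (x = v ∧ y = u), by
    constructor
    · intro x; exact Or.inl rfl
    · intro x y h; tauto
    · intro x y z h1 h2; rcases h1 with h1 | ⟨h,h'⟩ | ⟨h,h'⟩ <;>
        rcases h2 with h2 | ⟨k,k'⟩ | ⟨k,k'⟩ <;> subst_vars <;> tauto⟩

theorem transposition_meet_reducible
    {A : Type*} [Fintype A] (hA : 3 ≤ Fintype.card A)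
    (a b : A) (hab : a ≠ b)
    (f g₀ g₁ : A → A)
    (hfa : f a = b) (hfb : f b = a) (hf : ∀ x : A, x ≠ a → x ≠ b → f x = x)
    (hg₀a : g₀ a = a) (hg₀b : g₀ b = a) (hg₀ : ∀ x : A, x ≠ a → x ≠ b → g₀ x = x)
    (hg₁a : g₁ a = b) (hg₁b : g₁ b = b) (hg₁ : ∀ x : A, x ≠ a → x ≠ b → g₁ x = x) :
    ConOf f ⊂ ConOf g₀ ∧ ConOf f ⊂ ConOf g₁ ∧ ConOf f = ConOf g₀ ∩ ConOf g₁ := by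
  classical
  -- find a third element c
  obtain ⟨c, hca, hcb⟩ : ∃ c : A, c ≠ a ∧ c ≠ b := by
    have hcard : ({a, b} : Finset A).card < Fintype.card A := by
      have h1 : ({a, b} : Finset A).card ≤ 2 := by
        apply le_trans (Finset.card_insert_le _ _); simp
      omega
    have : (Finset.univ \ ({a, b} : Finset A)).Nonempty := by
      rw [← Finset.card_pos, Finset.card_sdiff_of_subset (Finset.subset_univ _), Finset.card_univ]
      omega
    obtain ⟨c, hc⟩ := this
    simp only [Finset.mem_sdiff, Finset.mem_univ, Finset.mem_insert,
      Finset.mem_singleton, true_and, not_or] at hc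
    exact ⟨c, hc.1, hc.2⟩
  -- ConOf f ⊆ ConOf g₀
  have sub0 : ConOf f ⊆ ConOf g₀ := by
    intro κ hκ x y hxy
    have hf' := hκ x y hxy
    rcases eq_or_ne a x with rfl | hxa
    · rcases eq_or_ne a y with rfl | hya
      · rw [hg₀a]
      · rcases eq_or_ne b y with rfl | hyb
        · rw [hg₀a, hg₀b]
        · rw [hg₀a, hg₀ y hya.symm hyb.symm]; exact hxy
    · rcases eq_or_ne b x with rfl | hxb
      · rcases eq_or_ne a y with rfl | hya
        · rw [hg₀b, hg₀a]
        · rcases eq_or_ne b y with rfl | hyb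
          · rw [hg₀b]
          · rw [hg₀b, hg₀ y hya.symm hyb.symm]
            rw [hfb, hf y hya.symm hyb.symm] at hf'; exact hf'
      · rcases eq_or_ne a y with rfl | hya
        · rw [hg₀ x hxa.symm hxb.symm, hg₀a]; exact hxy
        · rcases eq_or_ne b y with rfl | hyb
          · rw [hg₀ x hxa.symm hxb.symm, hg₀b]
            rw [hfb, hf x hxa.symm hxb.symm] at hf'; exact hf'
          · rw [hg₀ x hxa.symm hxb.symm, hg₀ y hya.symm hyb.symm]; exact hxy
  -- ConOf f ⊆ ConOf g₁
  have sub1 : ConOf f ⊆ ConOf g₁ := by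
    intro κ hκ x y hxy
    have hf' := hκ x y hxy
    rcases eq_or_ne a x with rfl | hxa
    · rcases eq_or_ne a y with rfl | hya
      · rw [hg₁a]
      · rcases eq_or_ne b y with rfl | hyb
        · rw [hg₁a, hg₁b]
        · rw [hg₁a, hg₁ y hya.symm hyb.symm]
          rw [hfa, hf y hya.symm hyb.symm] at hf'; exact hf'
    · rcases eq_or_ne b x with rfl | hxb
      · rcases eq_or_ne a y with rfl | hya
        · rw [hg₁b, hg₁a]
        · rcases eq_or_ne b y with rfl | hyb
          · rw [hg₁b]
          · rw [hg₁b, hg₁ y hya.symm hyb.symm]; exact hxy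
      · rcases eq_or_ne a y with rfl | hya
        · rw [hg₁ x hxa.symm hxb.symm, hg₁a]
          rw [hfa, hf x hxa.symm hxb.symm] at hf'; exact hf'
        · rcases eq_or_ne b y with rfl | hyb
          · rw [hg₁ x hxa.symm hxb.symm, hg₁b]; exact hxy
          · rw [hg₁ x hxa.symm hxb.symm, hg₁ y hya.symm hyb.symm]; exact hxy
  -- witnesses for strictness
  have w0 : pairSetoid a c ∈ ConOf g₀ := by
    intro x y hxy
    rcases hxy with rfl | ⟨h1, h2⟩ | ⟨h1, h2⟩
    · exact (pairSetoid a c).refl _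
    · rw [h1, h2, hg₀a, hg₀ c hca hcb]; exact Or.inr (Or.inl ⟨rfl, rfl⟩)
    · rw [h1, h2, hg₀ c hca hcb, hg₀a]; exact Or.inr (Or.inr ⟨rfl, rfl⟩)
  have w0f : pairSetoid a c ∉ ConOf f := by
    intro h
    have := h a c (Or.inr (Or.inl ⟨rfl, rfl⟩))
    rw [hfa, hf c hca hcb] at this
    rcases this with h' | ⟨h', _⟩ | ⟨h', _⟩
    · exact hcb h'.symm
    · exact hab h'.symm
    · exact hcb h'.symm
  have w1 : pairSetoid b c ∈ ConOf g₁ := by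
    intro x y hxy
    rcases hxy with rfl | ⟨h1, h2⟩ | ⟨h1, h2⟩
    · exact (pairSetoid b c).refl _
    · rw [h1, h2, hg₁b, hg₁ c hca hcb]; exact Or.inr (Or.inl ⟨rfl, rfl⟩)
    · rw [h1, h2, hg₁ c hca hcb, hg₁b]; exact Or.inr (Or.inr ⟨rfl, rfl⟩)
  have w1f : pairSetoid b c ∉ ConOf f := by
    intro h
    have := h b c (Or.inr (Or.inl ⟨rfl, rfl⟩))
    rw [hfb, hf c hca hcb] at this
    rcases this with h' | ⟨h', _⟩ | ⟨h', _⟩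
    · exact hca h'.symm
    · exact hab h'
    · exact hca h'.symm
  refine ⟨⟨sub0, fun hsub => w0f (hsub w0)⟩, ⟨sub1, fun hsub => w1f (hsub w1)⟩, ?_⟩
  apply Set.Subset.antisymm
  · exact Set.subset_inter sub0 sub1
  · rintro κ ⟨h0, h1⟩ x y hxy
    rcases eq_or_ne a x with rfl | hxa
    · rcases eq_or_ne a y with rfl | hya
      · rw [hfa]
      · rcases eq_or_ne b y with rfl | hyb
        · rw [hfa, hfb]; exact κ.symm hxy
        · rw [hfa, hf y hya.symm hyb.symm]
          have := h1 a y hxy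
          rw [hg₁a, hg₁ y hya.symm hyb.symm] at this; exact this
    · rcases eq_or_ne b x with rfl | hxb
      · rcases eq_or_ne a y with rfl | hya
        · rw [hfb, hfa]; exact κ.symm hxy
        · rcases eq_or_ne b y with rfl | hyb
          · rw [hfb]
          · rw [hfb, hf y hya.symm hyb.symm]
            have := h0 b y hxy
            rw [hg₀b, hg₀ y hya.symm hyb.symm] at this; exact this
      · rcases eq_or_ne a y with rfl | hya
        · rw [hfa, hf x hxa.symm hxb.symm]
          have := h1 x a hxy
          rw [hg₁a, hg₁ x hxa.symm hxb.symm] at this; exact this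
        · rcases eq_or_ne b y with rfl | hyb
          · rw [hfb, hf x hxa.symm hxb.symm]
            have := h0 x b hxy
            rw [hg₀b, hg₀ x hxa.symm hxb.symm] at this; exact this
          · rw [hf x hxa.symm hxb.symm, hf y hya.symm hyb.symm]; exact hxy
end

section
/- Let A be a finite set with |A| ≥ 3 and let f : A → A be a nontrivial function with f² = f (type I). Then Con(A,f) is a coatom in the lattice of all congruence lattices on A: Con(A,f) ≠ Eq(A) and there is no F ⊆ A^A with Con(A,f) ⊊ Con(A,F) ⊊ Eq(A). -/
/-- The congruence lattice of a set of functions. -/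
def ConSet {A : Type*} (F : Set (A → A)) : Set (Setoid A) :=
  {κ | ∀ f ∈ F, ∀ x y : A, κ.r x y → κ.r (f x) (f y)}

/-- A function is nontrivial if it is neither the identity nor a constant map. -/
def Nontriv {A : Type*} (f : A → A) : Prop :=
  f ≠ id ∧ ∀ c : A, f ≠ fun _ => c

namespace TypeI
variable {A : Type*}

/-- Setoid whose only nontrivial class is `{a,b}`. -/
def pairS (a b : A) : Setoid A where
  r x y := x = y ∨ (x = a ∧ y = b) ∨ (x = b ∧ y = a)
  iseqv := by
    refine ⟨fun x => Or.inl rfl, ?_, ?_⟩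
    · rintro x y (rfl | ⟨rfl, rfl⟩ | ⟨rfl, rfl⟩) <;> tauto
    · rintro x y z h1 h2
      rcases h1 with rfl | ⟨rfl, rfl⟩ | ⟨rfl, rfl⟩ <;>
        rcases h2 with h | ⟨h, h'⟩ | ⟨h, h'⟩ <;> subst_vars <;> tauto

/-- Setoid whose only nontrivial class is `B`. -/
def blockS (B : Set A) : Setoid A where
  r x y := x = y ∨ (x ∈ B ∧ y ∈ B)
  iseqv := by
    refine ⟨fun x => Or.inl rfl, ?_, ?_⟩
    · rintro x y (rfl | ⟨h1, h2⟩) <;> tauto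
    · rintro x y z (rfl | ⟨h1, h2⟩) (rfl | ⟨h3, h4⟩) <;> tauto

/-- Setoid whose nontrivial classes are the disjoint sets `B`, `C`. -/
def twoBlockS (B C : Set A) (hd : ∀ x ∈ B, x ∉ C) : Setoid A where
  r x y := x = y ∨ (x ∈ B ∧ y ∈ B) ∨ (x ∈ C ∧ y ∈ C)
  iseqv := by
    refine ⟨fun x => Or.inl rfl, ?_, ?_⟩
    · rintro x y (rfl | ⟨h1, h2⟩ | ⟨h1, h2⟩) <;> tauto
    · rintro x y z (rfl | ⟨h1, h2⟩ | ⟨h1, h2⟩) (rfl | ⟨h3, h4⟩ | ⟨h3, h4⟩) <;>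
        first
          | tauto
          | (exact absurd h3 (hd _ h2))
          | (exact absurd h4 (hd _ h2))
          | (exact absurd h2 (hd _ h3))

variable {f g e : A → A}

theorem pairS_mem {a b : A} (h : f a = f b ∨ (f a = a ∧ f b = b)) : pairS a b ∈ ConOf f := by
  rintro x y (rfl | ⟨rfl, rfl⟩ | ⟨rfl, rfl⟩)
  · exact Or.inl rfl
  · rcases h with h | ⟨h1, h2⟩
    · exact Or.inl h
    · rw [h1, h2]; exact Or.inr (Or.inl ⟨rfl, rfl⟩)
  · rcases h with h | ⟨h1, h2⟩
    · exact Or.inl h.symm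
    · rw [h1, h2]; exact Or.inr (Or.inr ⟨rfl, rfl⟩)

theorem blockS_mem {B : Set A} (h : Set.MapsTo f B B) : blockS B ∈ ConOf f := by
  rintro x y (rfl | ⟨h1, h2⟩)
  · exact Or.inl rfl
  · exact Or.inr ⟨h h1, h h2⟩

theorem twoBlockS_mem {B C : Set A} (hd : ∀ x ∈ B, x ∉ C) (h1 : Set.MapsTo f B C)
    (h2 : Set.MapsTo f C C) : twoBlockS B C hd ∈ ConOf f := by
  rintro x y (rfl | ⟨hx, hy⟩ | ⟨hx, hy⟩)
  · exact Or.inl rfl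
  · exact Or.inr (Or.inr ⟨h1 hx, h1 hy⟩)
  · exact Or.inr (Or.inr ⟨h2 hx, h2 hy⟩)

theorem pair_con (H : ConOf f ⊆ ConOf g) {a b : A} (h : f a = f b ∨ (f a = a ∧ f b = b)) :
    g a = g b ∨ (g a = a ∧ g b = b) ∨ (g a = b ∧ g b = a) :=
  H (pairS_mem h) a b (Or.inr (Or.inl ⟨rfl, rfl⟩))

theorem block_con (H : ConOf f ⊆ ConOf g) {B : Set A} (hB : Set.MapsTo f B B) {x y : A}
    (hx : x ∈ B) (hy : y ∈ B) : g x = g y ∨ (g x ∈ B ∧ g y ∈ B) := by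
  rcases H (blockS_mem hB) x y (Or.inr ⟨hx, hy⟩) with h | h
  · exact Or.inl h
  · exact Or.inr h

theorem twoBlock_con (H : ConOf f ⊆ ConOf g) {B C : Set A} (hd : ∀ x ∈ B, x ∉ C)
    (h1 : Set.MapsTo f B C) (h2 : Set.MapsTo f C C) {x y : A} (hx : x ∈ B) (hy : y ∈ B) :
    g x = g y ∨ (g x ∈ B ∧ g y ∈ B) ∨ (g x ∈ C ∧ g y ∈ C) :=
  H (twoBlockS_mem hd h1 h2) x y (Or.inr (Or.inl ⟨hx, hy⟩))


theorem swap_iter {r s : A} (h1 : g r = s) (h2 : g s = r) :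
    ∀ m : ℕ, (g^[m] r = r ∧ g^[m] s = s) ∨ (g^[m] r = s ∧ g^[m] s = r) := by
  intro m
  induction m with
  | zero => exact Or.inl ⟨rfl, rfl⟩
  | succ n ih =>
    rcases ih with ⟨p, q⟩ | ⟨p, q⟩
    · exact Or.inr ⟨by rw [Function.iterate_succ_apply', p, h1],
        by rw [Function.iterate_succ_apply', q, h2]⟩
    · exact Or.inl ⟨by rw [Function.iterate_succ_apply', p, h2],
        by rw [Function.iterate_succ_apply', q, h1]⟩

theorem conOf_iterate (m : ℕ) : ConOf g ⊆ ConOf (g^[m]) := by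
  intro κ hκ
  induction m with
  | zero => exact fun x y h => h
  | succ n ih =>
    intro x y h
    have := hκ _ _ (ih x y h)
    simpa [Function.iterate_succ_apply'] using this

theorem exists_idem [Finite A] (g : A → A) :
    ∃ m, 1 ≤ m ∧ ∀ x, g^[m] (g^[m] x) = g^[m] x := by
  obtain ⟨i, j, hne, hij⟩ := Finite.exists_ne_map_eq_of_infinite (fun n : ℕ => g^[n])
  wlog hlt : i < j generalizing i j
  · exact this j i hne.symm hij.symm (by omega)
  set p := j - i with hp
  have hp1 : 1 ≤ p := by omega
  have hpij : p + i = j := by omega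
  have step : ∀ v, g^[i + v + p] = g^[i + v] := by
    intro v
    have e1 : i + v + p = v + (p + i) := by ring
    rw [e1, Function.iterate_add, hpij, ← hij, ← Function.iterate_add]
    congr 1
    ring
  have key : ∀ v t, g^[i + v + t * p] = g^[i + v] := by
    intro v t
    induction t with
    | zero => simp
    | succ n ih =>
      have e1 : i + v + (n + 1) * p = i + (v + n * p) + p := by ring
      have e2 : i + v + n * p = i + (v + n * p) := by ring
      rw [e1, step (v + n * p), ← e2, ih]
  refine ⟨(i + 1) * p, by nlinarith, fun x => ?_⟩
  have hmi : i ≤ (i + 1) * p := by nlinarith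
  obtain ⟨v, hv⟩ : ∃ v, (i + 1) * p = i + v := ⟨(i + 1) * p - i, by omega⟩
  have e3 : (i + 1) * p + (i + 1) * p = i + v + (i + 1) * p := by omega
  calc g^[(i + 1) * p] (g^[(i + 1) * p] x) = g^[(i + 1) * p + (i + 1) * p] x := by
        rw [Function.iterate_add_apply]
    _ = g^[(i + 1) * p] x := by rw [e3, key v (i + 1), hv]


theorem inj_case (hid : ∀ x, f (f x) = f x) (H : ConOf f ⊆ ConOf g)
    (hinj : Function.Injective g) {a₀ r₁ s₁ : A} (ha₀ : f a₀ ≠ a₀)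
    (hr₁ : f r₁ = r₁) (hs₁ : f s₁ = s₁) (hrs : r₁ ≠ s₁) : ∀ x, g x = x := by
  have hmapfix : Set.MapsTo f {y | f y = y} {y | f y = y} := fun y _ => hid y
  have gR : ∀ r, f r = r → f (g r) = g r := by
    intro r hr
    obtain ⟨s, hs, hsr⟩ : ∃ s, f s = s ∧ s ≠ r := by
      by_cases h : r = r₁
      · exact ⟨s₁, hs₁, by rw [h]; exact hrs.symm⟩
      · exact ⟨r₁, hr₁, fun hh => h hh.symm⟩
    rcases block_con H hmapfix hr hs with h | ⟨h1, _⟩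
    · exact absurd (hinj h) hsr.symm
    · exact h1
  have P2 : ∀ a, f a ≠ a → g a = a ∧ g (f a) = f a := by
    intro a ha
    rcases pair_con H (Or.inl (hid a).symm) with h | h | ⟨h1, h2⟩
    · exact absurd (hinj h).symm ha
    · exact h
    · exfalso
      have := gR (f a) (hid a)
      rw [h2] at this
      exact ha this
  have hgw₀ : g (f a₀) = f a₀ := (P2 a₀ ha₀).2
  have P3 : ∀ r, f r = r → g r = r := by
    intro r hr
    by_cases h : r = f a₀
    · rw [h, hgw₀]
    · rcases pair_con H (Or.inr ⟨hr, hid a₀⟩) with hh | ⟨h1, _⟩ | ⟨_, h2⟩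
      · exact absurd (hinj hh) h
      · exact h1
      · rw [hgw₀] at h2; exact absurd h2.symm h
  intro x
  by_cases hx : f x = x
  · exact P3 x hx
  · exact (P2 x hx).1


theorem iter_const_case (hid : ∀ x, f (f x) = f x) (H : ConOf f ⊆ ConOf g)
    {m : ℕ} {c : A} (hc : ∀ x, g^[m] x = c) {a₀ : A} (ha₀ : f a₀ ≠ a₀)
    (hnc : ∃ u v, g u ≠ g v) : False := by
  have hfixc : ∀ r, g r = r → r = c := by
    intro r hr
    rw [← hc r, Function.iterate_fixed hr]
  have hswap : ∀ r s : A, g r = s → g s = r → r = s := by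
    intro r s h1 h2
    rcases swap_iter h1 h2 m with ⟨p, q⟩ | ⟨p, q⟩
    · rw [← p, hc r, ← q, hc s]
    · rw [← p, hc r, ← q, hc s]
  have hC1 : ∀ r s, f r = r → f s = s → g r = g s := by
    intro r s hr hs
    by_cases hrs : r = s
    · rw [hrs]
    · rcases pair_con H (Or.inr ⟨hr, hs⟩) with h | ⟨h1, h2⟩ | ⟨h1, h2⟩
      · exact h
      · exact absurd ((hfixc r h1).trans (hfixc s h2).symm) hrs
      · exact absurd (hswap r s h1 h2) hrs
  set r₁ := f a₀ with hr₁def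
  have hr₁ : f r₁ = r₁ := hid a₀
  set w := g r₁ with hwdef
  have hw_all : ∀ r, f r = r → g r = w := fun r hr => hC1 r r₁ hr hr₁
  by_cases hfw : f w = w
  · have hgw : g w = w := hw_all w hfw
    have hwc : w = c := hfixc w hgw
    have hall : ∀ x, g x = c := by
      intro x
      by_cases hx : f x = x
      · rw [hw_all x hx, hwc]
      · rcases pair_con H (Or.inl (hid x).symm) with h | ⟨h1, h2⟩ | ⟨h1, h2⟩
        · rw [h, hw_all (f x) (hid x), hwc]
        · exfalso
          have hxc : x = c := hfixc x h1
          apply hx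
          rw [hxc, ← hwc]
          exact hfw
        · exfalso
          have hxw : x = w := by rw [← h2, hw_all (f x) (hid x)]
          exact hx (by rw [hxw]; exact hfw)
    obtain ⟨u, v, huv⟩ := hnc
    exact huv (by rw [hall u, hall v])
  · have hxw : ∀ x, x ≠ w → g x = w := by
      intro x hxne
      by_cases hx : f x = x
      · exact hw_all x hx
      · have hmap : Set.MapsTo f (insert x {y | f y = y}) (insert x {y | f y = y}) := by
          intro y hy
          rcases Set.mem_insert_iff.1 hy with rfl | hy'
          · exact Set.mem_insert_iff.2 (Or.inr (hid y))
          · exact Set.mem_insert_iff.2 (Or.inr (hid y))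
        rcases block_con H hmap (Set.mem_insert x _)
            (Set.mem_insert_iff.2 (Or.inr hr₁)) with h | ⟨_, h2⟩
        · exact h
        · exfalso
          rcases Set.mem_insert_iff.1 h2 with h3 | h3
          · exact hxne h3.symm
          · exact hfw h3
    by_cases hgw : g w = w
    · obtain ⟨u, v, huv⟩ := hnc
      have hall : ∀ x, g x = w := by
        intro x
        by_cases hx : x = w
        · rw [hx, hgw]
        · exact hxw x hx
      exact huv (by rw [hall u, hall v])
    · have hu : g w ≠ w := hgw
      have hgu : g (g w) = w := hxw (g w) hu
      exact hu (hswap w (g w) rfl hgu).symm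


theorem idem_case (hid : ∀ x, f (f x) = f x) (H : ConOf f ⊆ ConOf e)
    (hee : ∀ x, e (e x) = e x) (he_id : ¬ ∀ x, e x = x)
    (he_nc : ∀ c, ∃ x, e x ≠ c) : ConOf e ⊆ ConOf f := by
  have B1 : ∀ r s, f r = r → f s = s → e r = e s ∨ (e r = r ∧ e s = s) := by
    intro r s hr hs
    by_cases hrs : r = s
    · exact Or.inl (by rw [hrs])
    · rcases pair_con H (Or.inr ⟨hr, hs⟩) with h | h | ⟨h1, h2⟩
      · exact Or.inl h
      · exact Or.inr h
      · exfalso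
        have h3 : e s = s := by rw [← h1, hee r, h1]
        exact hrs (h2.symm.trans h3)
  by_cases hfix : ∀ r, f r = r → e r = r
  · -- Case A : e fixes all fixed points of f
    have A1 : ∀ a, e a = a ∨ e a = f a := by
      intro a
      by_cases ha : f a = a
      · exact Or.inl (hfix a ha)
      · rcases pair_con H (Or.inl (hid a).symm) with h | ⟨h1, _⟩ | ⟨h1, h2⟩
        · exact Or.inr (h.trans (hfix (f a) (hid a)))
        · exact Or.inl h1
        · exfalso
          have := hfix (f a) (hid a)
          rw [h2] at this
          exact ha this.symm
    by_cases hef : ∀ x, e x = f x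
    · intro κ hκ x y hxy
      have := hκ x y hxy
      rwa [hef x, hef y] at this
    · exfalso
      push_neg at hef
      obtain ⟨a, hae⟩ := hef
      have heaa : e a = a := (A1 a).resolve_right hae
      have haf : f a ≠ a := fun h => hae (by rw [heaa, h])
      apply he_id
      intro b
      by_contra hbe
      have hebfb : e b = f b := (A1 b).resolve_left hbe
      have hfb : f b ≠ b := fun h => hbe (by rw [hebfb, h])
      by_cases hfab : f a = f b
      · rcases pair_con H (Or.inl hfab) with h | ⟨_, h2⟩ | ⟨h1, h2⟩
        · -- e a = e b : a = f b
          rw [heaa, hebfb] at h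
          apply haf
          rw [h, hid b, ← h]
        · exact hbe h2
        · -- e a = b
          rw [heaa] at h1
          apply hbe
          rw [← h1, heaa, h1]
      · -- two blocks {a,b} and {f a, f b}
        have hd : ∀ x ∈ ({a, b} : Set A), x ∉ ({f a, f b} : Set A) := by
          rintro x (rfl | rfl) hmem
          · rcases hmem with h | h
            · exact haf h.symm
            · apply haf; rw [h, hid b, ← h]
          · rcases hmem with h | h
            · apply hfb; rw [h, hid a, ← h]
            · exact hfb h.symm
        have hm1 : Set.MapsTo f ({a, b} : Set A) ({f a, f b} : Set A) := by
          rintro x (rfl | rfl)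
          · exact Set.mem_insert _ _
          · exact Set.mem_insert_iff.2 (Or.inr rfl)
        have hm2 : Set.MapsTo f ({f a, f b} : Set A) ({f a, f b} : Set A) := by
          rintro x (rfl | rfl)
          · exact Set.mem_insert_iff.2 (Or.inl (hid a))
          · exact Set.mem_insert_iff.2 (Or.inr (hid b))
        rcases twoBlock_con H hd hm1 hm2 (Set.mem_insert a _)
            (Set.mem_insert_iff.2 (Or.inr rfl)) with h | ⟨h1, h2⟩ | ⟨h1, _⟩
        · rw [heaa, hebfb] at h
          exact hd a (Set.mem_insert a _) (by rw [h]; exact Set.mem_insert_iff.2 (Or.inr rfl))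
        · rw [hebfb] at h2
          exact hd (f b) h2 (Set.mem_insert_iff.2 (Or.inr rfl))
        · rw [heaa] at h1
          exact hd a (Set.mem_insert a _) h1
  · -- Case B : e collapses the fixed points of f onto w
    push_neg at hfix
    obtain ⟨r₀, hr₀f, hr₀e⟩ := hfix
    have Bconst : ∀ s, f s = s → e s = e r₀ := by
      intro s hs
      rcases B1 s r₀ hs hr₀f with h | ⟨_, h2⟩
      · exact h
      · exact absurd h2 hr₀e
    set w := e r₀ with hwdef
    have heww : e w = w := hee r₀
    have hfw : f w = w := by
      by_contra hfw
      obtain ⟨x₀, hx₀⟩ := he_nc w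
      apply hx₀
      by_cases hxw : x₀ = w
      · rw [hxw]; exact heww
      · by_cases hx : f x₀ = x₀
        · exact Bconst x₀ hx
        · have hmap : Set.MapsTo f (insert x₀ {y | f y = y}) (insert x₀ {y | f y = y}) := by
            intro y hy
            rcases Set.mem_insert_iff.1 hy with rfl | hy'
            · exact Set.mem_insert_iff.2 (Or.inr (hid y))
            · exact Set.mem_insert_iff.2 (Or.inr (hid y))
          rcases block_con H hmap (Set.mem_insert x₀ _)
              (Set.mem_insert_iff.2 (Or.inr hr₀f)) with h | ⟨_, h2⟩
          · exact h
          · exfalso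
            rcases Set.mem_insert_iff.1 h2 with h3 | h3
            · exact hxw h3.symm
            · exact hfw h3
    have B4 : ∀ a, f a ≠ a → e a = w ∨ (e a = a ∧ f a = w) := by
      intro a ha
      rcases pair_con H (Or.inl (hid a).symm) with h | ⟨h1, h2⟩ | ⟨h1, h2⟩
      · exact Or.inl (h.trans (Bconst (f a) (hid a)))
      · refine Or.inr ⟨h1, ?_⟩
        rw [← Bconst (f a) (hid a), h2]
      · exfalso
        have haw : a = w := by rw [← h2, Bconst (f a) (hid a)]
        apply ha
        rw [haw]; exact hfw
    have ha₁ : ∃ a, f a ≠ a ∧ e a = a := by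
      by_contra h
      push_neg at h
      obtain ⟨x₀, hx₀⟩ := he_nc w
      apply hx₀
      by_cases hx : f x₀ = x₀
      · exact Bconst x₀ hx
      · rcases B4 x₀ hx with h' | ⟨h1, _⟩
        · exact h'
        · exact absurd h1 (h x₀ hx)
    obtain ⟨a₁, ha₁f, ha₁e⟩ := ha₁
    have ha₁nw : a₁ ≠ w := fun h => ha₁f (by rw [h]; exact hfw)
    have ha₁w : f a₁ = w := by
      rcases B4 a₁ ha₁f with h | ⟨_, h2⟩
      · exact absurd (ha₁e.symm.trans h) ha₁nw
      · exact h2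
    have B6 : ∀ b, f b ≠ b → e b = b ∧ f b = w := by
      intro b hb
      rcases B4 b hb with hbw | h
      swap
      · exact h
      exfalso
      have hbnw : b ≠ w := fun h => hb (by rw [h]; exact hfw)
      by_cases hfbw : f b = w
      · rcases pair_con H (Or.inl (ha₁w.trans hfbw.symm)) with h | ⟨_, h2⟩ | ⟨h1, h2⟩
        · rw [ha₁e, hbw] at h
          exact ha₁nw h
        · rw [hbw] at h2
          exact hbnw h2.symm
        · exact ha₁nw (h2.symm.trans hbw)
      · have hd : ∀ x ∈ ({a₁, b} : Set A), x ∉ ({w, f b} : Set A) := by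
          rintro x (rfl | rfl) hmem
          · rcases hmem with h' | h'
            · exact ha₁nw h'
            · apply ha₁f; rw [h', hid b, ← h']
          · rcases hmem with h' | h'
            · exact hbnw h'
            · exact hb h'.symm
        have hm1 : Set.MapsTo f ({a₁, b} : Set A) ({w, f b} : Set A) := by
          rintro x (rfl | rfl)
          · exact Set.mem_insert_iff.2 (Or.inl ha₁w)
          · exact Set.mem_insert_iff.2 (Or.inr rfl)
        have hm2 : Set.MapsTo f ({w, f b} : Set A) ({w, f b} : Set A) := by
          rintro x (rfl | rfl)
          · exact Set.mem_insert_iff.2 (Or.inl hfw)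
          · exact Set.mem_insert_iff.2 (Or.inr (hid b))
        rcases twoBlock_con H hd hm1 hm2 (Set.mem_insert a₁ _)
            (Set.mem_insert_iff.2 (Or.inr rfl)) with h | ⟨h1, h2⟩ | ⟨h1, _⟩
        · rw [ha₁e, hbw] at h
          exact ha₁nw h
        · rw [hbw] at h2
          rcases h2 with h3 | h3
          · exact ha₁nw h3.symm
          · exact hbnw h3.symm
        · rw [ha₁e] at h1
          exact hd a₁ (Set.mem_insert a₁ _) h1
    -- now f = id except on {b | f b ≠ b} ↦ w, and e is the dual
    intro κ hκ x y hxy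
    by_cases hx : f x = x <;> by_cases hy : f y = y
    · rw [hx, hy]; exact hxy
    · rw [hx, (B6 y hy).2]
      have h1 := hκ x y hxy
      rw [Bconst x hx, (B6 y hy).1] at h1
      exact κ.iseqv.trans hxy (κ.iseqv.symm h1)
    · rw [(B6 x hx).2, hy]
      have h1 := hκ x y hxy
      rw [(B6 x hx).1, Bconst y hy] at h1
      exact κ.iseqv.trans (κ.iseqv.symm h1) hxy
    · have h2 : κ.r w w := κ.iseqv.refl w
      rw [(B6 x hx).2, (B6 y hy).2]
      try exact h2


theorem main_lemma [Finite A] (hid : ∀ x, f (f x) = f x) (hnt : Nontriv f)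
    (hg : Nontriv g) (H : ConOf f ⊆ ConOf g) : ConOf g ⊆ ConOf f := by
  obtain ⟨a₀, ha₀⟩ : ∃ a, f a ≠ a := by
    by_contra h
    push_neg at h
    exact hnt.1 (funext h)
  obtain ⟨u, hu⟩ : ∃ u, f u ≠ f a₀ := by
    by_contra h
    push_neg at h
    exact hnt.2 (f a₀) (funext h)
  have hr₁ : f (f u) = f u := hid u
  have hs₁ : f (f a₀) = f a₀ := hid a₀
  obtain ⟨m, hm1, hmid⟩ := exists_idem g
  have Hge : ConOf g ⊆ ConOf (g^[m]) := conOf_iterate m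
  have Hfe : ConOf f ⊆ ConOf (g^[m]) := H.trans Hge
  by_cases hcase1 : ∀ x, g^[m] x = x
  · exfalso
    have hinj : Function.Injective g := by
      intro x y hxy
      obtain ⟨k, rfl⟩ : ∃ k, m = k + 1 := ⟨m - 1, by omega⟩
      have : g^[k + 1] x = g^[k + 1] y := by
        rw [Function.iterate_succ_apply, Function.iterate_succ_apply, hxy]
      rw [hcase1 x, hcase1 y] at this
      exact this
    exact hg.1 (funext (inj_case hid H hinj ha₀ hr₁ hs₁ hu))
  by_cases hcase2 : ∃ c, ∀ x, g^[m] x = c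
  · exfalso
    obtain ⟨c, hc⟩ := hcase2
    have hnc : ∃ u' v', g u' ≠ g v' := by
      by_contra h
      push_neg at h
      exact hg.2 (g a₀) (funext fun x => h x a₀)
    exact iter_const_case hid H hc ha₀ hnc
  · push_neg at hcase2
    exact Hge.trans (idem_case hid Hfe hmid hcase1 hcase2)

end TypeI

/-- Type (I) functions give coatoms: `Con(A,f) ≠ Eq(A)` and there is no `F` with
`Con(A,f) ⊊ Con(A,F) ⊊ Eq(A)`. -/
theorem typeI_coatom {A : Type*} [Fintype A] (hA : 3 ≤ Fintype.card A)
    (f : A → A) (hnt : Nontriv f) (hidem : f ∘ f = f) :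
    ConOf f ≠ Set.univ ∧
      ¬ ∃ F : Set (A → A), ConOf f ⊂ ConSet F ∧ ConSet F ⊂ Set.univ := by
  have hid : ∀ x, f (f x) = f x := fun x => congrFun hidem x
  obtain ⟨a₀, ha₀⟩ : ∃ a, f a ≠ a := by
    by_contra h
    push_neg at h
    exact hnt.1 (funext h)
  obtain ⟨u, hu⟩ : ∃ u', f u' ≠ f a₀ := by
    by_contra h
    push_neg at h
    exact hnt.2 (f a₀) (funext h)
  constructor
  · intro heq
    have hκ : TypeI.pairS a₀ u ∈ ConOf f := by
      rw [heq]; exact Set.mem_univ _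
    rcases hκ a₀ u (Or.inr (Or.inl ⟨rfl, rfl⟩)) with h | ⟨h1, _⟩ | ⟨h1, h2⟩
    · exact hu h.symm
    · exact ha₀ h1
    · exact ha₀ (by rw [← h2, hid u, h2])
  · rintro ⟨F, h1, h2⟩
    have hsub : ∀ g ∈ F, ConOf f ⊆ ConOf g := fun g hg κ hκ => (h1.1 hκ) g hg
    by_cases hng : ∃ g ∈ F, Nontriv g
    · obtain ⟨g, hgF, hgnt⟩ := hng
      have hmain : ConOf g ⊆ ConOf f := TypeI.main_lemma hid hnt hgnt (hsub g hgF)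
      have : ConSet F ⊆ ConOf f := fun κ hκ => hmain (hκ g hgF)
      exact h1.2 this
    · push_neg at hng
      apply h2.2
      intro κ _
      intro g hgF x y hxy
      have hgtriv := hng g hgF
      by_cases hgid : g = id
      · rw [hgid]; exact hxy
      · have : ∃ c, g = fun _ => c := by
          unfold Nontriv at hgtriv
          push_neg at hgtriv
          exact hgtriv hgid
        obtain ⟨c, rfl⟩ := this
        exact κ.iseqv.refl c
end

section
/- Let A be a finite set and f : A → A a nontrivial function such that f² is a constant map with value 0 and the preimage f⁻¹(0) has at least 3 elements (type II). Then Con(A,f) is a coatom in the lattice of all congruence lattices on A. -/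
/-- The setoid with one (potentially) nontrivial block `B`. -/
def blkS {A : Type*} (B : Set A) : Setoid A where
  r x y := x = y ∨ (x ∈ B ∧ y ∈ B)
  iseqv := by
    refine ⟨fun _ => Or.inl rfl, ?_, ?_⟩
    · rintro x y (rfl | ⟨h1, h2⟩)
      · exact Or.inl rfl
      · exact Or.inr ⟨h2, h1⟩
    · rintro x y w (rfl | ⟨h1, h2⟩) h'
      · exact h'
      · rcases h' with rfl | ⟨h3, h4⟩
        · exact Or.inr ⟨h1, h2⟩
        · exact Or.inr ⟨h1, h4⟩

/-- The setoid with two disjoint (potentially) nontrivial blocks `B` and `C`. -/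
def blk2S {A : Type*} (B C : Set A) (hd : ∀ a, a ∈ B → a ∈ C → False) : Setoid A where
  r x y := x = y ∨ (x ∈ B ∧ y ∈ B) ∨ (x ∈ C ∧ y ∈ C)
  iseqv := by
    refine ⟨fun _ => Or.inl rfl, ?_, ?_⟩
    · rintro x y (rfl | ⟨h1, h2⟩ | ⟨h1, h2⟩)
      · exact Or.inl rfl
      · exact Or.inr (Or.inl ⟨h2, h1⟩)
      · exact Or.inr (Or.inr ⟨h2, h1⟩)
    · rintro x y w (rfl | ⟨h1, h2⟩ | ⟨h1, h2⟩) h'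
      · exact h'
      · rcases h' with rfl | ⟨h3, h4⟩ | ⟨h3, h4⟩
        · exact Or.inr (Or.inl ⟨h1, h2⟩)
        · exact Or.inr (Or.inl ⟨h1, h4⟩)
        · exact (hd y h2 h3).elim
      · rcases h' with rfl | ⟨h3, h4⟩ | ⟨h3, h4⟩
        · exact Or.inr (Or.inr ⟨h1, h2⟩)
        · exact (hd y h3 h2).elim
        · exact Or.inr (Or.inr ⟨h1, h4⟩)

/-- A set of cardinality at least 3 has an element avoiding any two given ones. -/
lemma exK_aux {A : Type*} {K : Set A} (hK : 3 ≤ K.ncard) (a b : A) :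
    ∃ u, u ∈ K ∧ u ≠ a ∧ u ≠ b := by
  by_contra h
  push_neg at h
  have hsub : K ⊆ {a, b} := by
    intro u hu
    by_cases h1 : u = a
    · exact Or.inl h1
    · exact Or.inr (h u hu h1)
  have hfin : ({a, b} : Set A).Finite := (Set.finite_singleton b).insert a
  have h1 := Set.ncard_le_ncard hsub hfin
  have h2 : ({a, b} : Set A).ncard ≤ 2 := by
    have := Set.ncard_insert_le a ({b} : Set A)
    simpa using this
  omega

/-- Key lemma: any nontrivial `g` with `ConOf f ⊆ ConOf g` satisfies `ConOf g ⊆ ConOf f`. -/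
lemma key_lemma {A : Type*} [Fintype A] (f : A → A) (z : A)
    (hconst : ∀ x : A, f (f x) = z)
    (hker : 3 ≤ Set.ncard {x : A | f x = z})
    (g : A → A) (hg : Nontriv g) (hsub : ConOf f ⊆ ConOf g) :
    ConOf g ⊆ ConOf f := by
  set K : Set A := {x : A | f x = z} with hKdef
  obtain ⟨x₀, hx₀⟩ : K.Nonempty := Set.nonempty_of_ncard_ne_zero (by omega)
  have hfz : f z = z := by
    have h1 := hconst x₀
    have h2 : f x₀ = z := hx₀
    rw [h2] at h1
    exact h1
  have hzK : z ∈ K := hfz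
  have hfK : ∀ x, f x ∈ K := fun x => hconst x
  -- pairs within K
  have pairK : ∀ a ∈ K, ∀ b ∈ K, a ≠ b →
      g a = g b ∨ ((g a = a ∨ g a = b) ∧ (g b = a ∨ g b = b)) := by
    intro a ha b hb hab
    have hκ : blkS ({a, b} : Set A) ∈ ConOf f := by
      intro x y hxy
      rcases hxy with rfl | ⟨h1, h2⟩
      · exact Or.inl rfl
      · left
        simp only [Set.mem_insert_iff, Set.mem_singleton_iff] at h1 h2
        have hx : f x = z := by rcases h1 with rfl | rfl; exacts [ha, hb]
        have hy : f y = z := by rcases h2 with rfl | rfl; exacts [ha, hb]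
        rw [hx, hy]
    have hgκ : g a = g b ∨ (g a ∈ ({a, b} : Set A) ∧ g b ∈ ({a, b} : Set A)) :=
      hsub hκ a b (Or.inr ⟨by simp, by simp⟩)
    simpa only [Set.mem_insert_iff, Set.mem_singleton_iff] using hgκ
  -- the 3-element block {x, f x, z} is an f-congruence
  have hκB : ∀ x : A, blkS ({x, f x, z} : Set A) ∈ ConOf f := by
    intro x a b hab
    rcases hab with rfl | ⟨h1, h2⟩
    · exact Or.inl rfl
    · right
      simp only [Set.mem_insert_iff, Set.mem_singleton_iff] at h1 h2 ⊢
      constructor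
      · rcases h1 with rfl | rfl | rfl
        · exact Or.inr (Or.inl rfl)
        · exact Or.inr (Or.inr (hconst x))
        · exact Or.inr (Or.inr hfz)
      · rcases h2 with rfl | rfl | rfl
        · exact Or.inr (Or.inl rfl)
        · exact Or.inr (Or.inr (hconst x))
        · exact Or.inr (Or.inr hfz)
  -- the two-block congruence {x,u} {f x, z} for x ∉ K, u ∈ K \ {f x, z}, applied to (x, u)
  have hκ2 : ∀ x, x ∉ K → ∀ u, u ∈ K → u ≠ f x → u ≠ z →
      g x = g u ∨ ((g x = x ∨ g x = u) ∧ (g u = x ∨ g u = u)) ∨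
        ((g x = f x ∨ g x = z) ∧ (g u = f x ∨ g u = z)) := by
    intro x hx u huK hufx huz
    have hux : u ≠ x := fun h => hx (h ▸ huK)
    have hd : ∀ a, a ∈ ({x, u} : Set A) → a ∈ ({f x, z} : Set A) → False := by
      intro a ha hb
      simp only [Set.mem_insert_iff, Set.mem_singleton_iff] at ha hb
      have haK : a ∈ K := by
        rcases hb with rfl | rfl
        · exact hfK x
        · exact hzK
      rcases ha with rfl | rfl
      · exact hx haK
      · rcases hb with h | h
        · exact hufx h
        · exact huz h
    have hκ : blk2S ({x, u} : Set A) ({f x, z} : Set A) hd ∈ ConOf f := by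
      intro a b hab
      rcases hab with rfl | ⟨h1, h2⟩ | ⟨h1, h2⟩
      · exact Or.inl rfl
      · right; right
        simp only [Set.mem_insert_iff, Set.mem_singleton_iff] at h1 h2 ⊢
        constructor
        · rcases h1 with rfl | rfl
          · exact Or.inl rfl
          · exact Or.inr huK
        · rcases h2 with rfl | rfl
          · exact Or.inl rfl
          · exact Or.inr huK
      · left
        simp only [Set.mem_insert_iff, Set.mem_singleton_iff] at h1 h2
        have ha : f a = z := by rcases h1 with rfl | rfl; exacts [hconst x, hfz]
        have hb : f b = z := by rcases h2 with rfl | rfl; exacts [hconst x, hfz]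
        rw [ha, hb]
    have hgκ : g x = g u ∨ (g x ∈ ({x, u} : Set A) ∧ g u ∈ ({x, u} : Set A)) ∨
        (g x ∈ ({f x, z} : Set A) ∧ g u ∈ ({f x, z} : Set A)) :=
      hsub hκ x u (Or.inr (Or.inl ⟨by simp, by simp⟩))
    simpa only [Set.mem_insert_iff, Set.mem_singleton_iff] using hgκ
  -- Step 1 : g is the identity on K, or constant on K
  have step1 : (∀ x ∈ K, g x = x) ∨ (∃ c, ∀ x ∈ K, g x = c) := by
    by_cases h : ∀ x ∈ K, g x = x
    · exact Or.inl h
    · push_neg at h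
      obtain ⟨x, hxK, hgx⟩ := h
      right
      refine ⟨g x, ?_⟩
      by_cases hcK : g x ∈ K
      · have hstep : ∀ y ∈ K, y ≠ x → y ≠ g x → g y = g x := by
          intro y hy hyx hyc
          rcases pairK x hxK y hy (fun h' => hyx h'.symm) with h' | ⟨h1, _⟩
          · exact h'.symm
          · rcases h1 with h1 | h1
            · exact (hgx h1).elim
            · exact (hyc h1.symm).elim
        obtain ⟨y0, hy0K, hy0x, hy0c⟩ := exK_aux hker x (g x)
        have hy0 : g y0 = g x := hstep y0 hy0K hy0x hy0c
        have hgc : g (g x) = g x := by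
          rcases pairK (g x) hcK y0 hy0K (fun h' => hy0c h'.symm) with h' | ⟨h1, _⟩
          · rw [h', hy0]
          · rcases h1 with h1 | h1
            · exact h1
            · exfalso
              rcases pairK x hxK (g x) hcK (Ne.symm hgx) with h' | ⟨_, h4⟩
              · exact hy0c (h'.trans h1).symm
              · rcases h4 with h4 | h4
                · rw [h1] at h4; exact hy0x h4
                · rw [h1] at h4; exact hy0c h4
        intro y hy
        by_cases h1 : y = x
        · subst h1; rfl
        · by_cases h2 : y = g x
          · subst h2; exact hgc
          · exact hstep y hy h1 h2
      · intro y hy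
        by_cases h1 : y = x
        · subst h1; rfl
        · rcases pairK x hxK y hy (fun h' => h1 h'.symm) with h' | ⟨h2, _⟩
          · exact h'.symm
          · exfalso
            rcases h2 with h2 | h2
            · exact hgx h2
            · exact hcK (h2 ▸ hy)
  rcases step1 with hid | ⟨c, hc⟩
  · -- Case I: g is identity on K ⟹ g = id, contradiction with nontriviality
    exfalso
    apply hg.1
    funext x
    show g x = x
    by_cases hx : x ∈ K
    · exact hid x hx
    · by_contra hgx
      have hfxz : f x ≠ z := hx
      obtain ⟨u, huK, hufx, huz⟩ := exK_aux hker (f x) z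
      -- g x ∈ {x, f x, z}
      have h1 : g x = g z ∨ (g x ∈ ({x, f x, z} : Set A) ∧ g z ∈ ({x, f x, z} : Set A)) :=
        hsub (hκB x) x z (Or.inr ⟨by simp, by simp⟩)
      rw [hid z hzK] at h1
      have hgxB : g x = x ∨ g x = f x ∨ g x = z := by
        rcases h1 with h1 | ⟨h1a, _⟩
        · rw [h1]; exact Or.inr (Or.inr rfl)
        · simpa only [Set.mem_insert_iff, Set.mem_singleton_iff] using h1a
      have h2 := hκ2 x hx u huK hufx huz
      rw [hid u huK] at h2
      rcases h2 with h2 | ⟨h2a, _⟩ | ⟨_, h2b⟩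
      · -- g x = u
        rcases hgxB with h | h | h
        · exact hgx h
        · rw [h2] at h; exact hufx h
        · rw [h2] at h; exact huz h
      · rcases h2a with h | h
        · exact hgx h
        · rcases hgxB with h' | h' | h'
          · exact hgx h'
          · rw [h] at h'; exact hufx h'
          · rw [h] at h'; exact huz h'
      · rcases h2b with h | h
        · exact hufx h
        · exact huz h
  · -- Case II: g is constant c on K
    have hgz : g z = c := hc z hzK
    -- the general constraint for points outside K
    have G : ∀ x, x ∉ K → g x = c ∨ (g x = f x ∧ c = z) ∨ (g x = z ∧ c = f x) := by
      intro x hx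
      by_cases hgc : g x = c
      · exact Or.inl hgc
      · right
        have hfxz : f x ≠ z := hx
        have hxz : x ≠ z := fun h => hx (h ▸ hzK)
        have hxfx : x ≠ f x := fun h => hx (h ▸ hfK x)
        have h1 : g x = g z ∨ (g x ∈ ({x, f x, z} : Set A) ∧ g z ∈ ({x, f x, z} : Set A)) :=
          hsub (hκB x) x z (Or.inr ⟨by simp, by simp⟩)
      -- g x ∈ {x, f x, z} and c ∈ {x, f x, z}
        rw [hgz] at h1
        have hB : (g x = x ∨ g x = f x ∨ g x = z) ∧ (c = x ∨ c = f x ∨ c = z) := by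
          rcases h1 with h1 | ⟨h1a, h1b⟩
          · exact absurd h1 hgc
          · constructor
            · simpa only [Set.mem_insert_iff, Set.mem_singleton_iff] using h1a
            · simpa only [Set.mem_insert_iff, Set.mem_singleton_iff] using h1b
        obtain ⟨u, huK, hufx, huz⟩ := exK_aux hker (f x) z
        have hux : u ≠ x := fun h => hx (h ▸ huK)
        have h2 := hκ2 x hx u huK hufx huz
        rw [hc u huK] at h2
        rcases h2 with h2 | ⟨h2a, h2b⟩ | ⟨h2a, h2b⟩
        · exact absurd h2 hgc
        · -- g x ∈ {x, u}, c ∈ {x, u} : forces g x = x = c, contradiction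
          exfalso
          have hgxx : g x = x := by
            rcases h2a with h | h
            · exact h
            · exfalso
              rcases hB.1 with h' | h' | h'
              · exact hux (h ▸ h')
              · exact hufx (h ▸ h')
              · exact huz (h ▸ h')
          have hcx : c = x := by
            rcases h2b with h | h
            · exact h
            · exfalso
              rcases hB.2 with h' | h' | h'
              · exact hux (h ▸ h')
              · exact hufx (h ▸ h')
              · exact huz (h ▸ h')
          rw [hgxx, hcx] at hgc
          exact hgc rfl
        · -- g x, c ∈ {f x, z}, g x ≠ c
          rcases h2b with hcfx | hcz
          · -- c = f x
            right
            refine ⟨?_, hcfx⟩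
            rcases h2a with h | h
            · rw [h, ← hcfx] at hgc; exact absurd rfl hgc
            · exact h
          · -- c = z
            left
            refine ⟨?_, hcz⟩
            rcases h2a with h | h
            · exact h
            · rw [h, ← hcz] at hgc; exact absurd rfl hgc
    -- mixing exclusion
    have mix : ∀ x, x ∉ K → ∀ y, y ∉ K → g x = z → g y ≠ z → False := by
      intro x hx y hy hgx hgy
      have hxy : x ≠ y := fun h => hgy (h ▸ hgx)
      have hzx : z ≠ x := fun h => hx (h ▸ hzK)
      have hzy : z ≠ y := fun h => hy (h ▸ hzK)
      by_cases hf : f x = f y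
      · -- kernel pair {x, y}
        have hκ : blkS ({x, y} : Set A) ∈ ConOf f := by
          intro a b hab
          rcases hab with rfl | ⟨h1, h2⟩
          · exact Or.inl rfl
          · left
            simp only [Set.mem_insert_iff, Set.mem_singleton_iff] at h1 h2
            have ha : f a = f x := by rcases h1 with rfl | rfl; exacts [rfl, hf.symm]
            have hb : f b = f x := by rcases h2 with rfl | rfl; exacts [rfl, hf.symm]
            rw [ha, hb]
        have h1 : g x = g y ∨ (g x ∈ ({x, y} : Set A) ∧ g y ∈ ({x, y} : Set A)) :=
          hsub hκ x y (Or.inr ⟨by simp, by simp⟩)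
        rw [hgx] at h1
        rcases h1 with h1 | ⟨h1a, _⟩
        · exact hgy h1.symm
        · simp only [Set.mem_insert_iff, Set.mem_singleton_iff] at h1a
          rcases h1a with h | h
          · exact hzx h
          · exact hzy h
      · -- two blocks {x, y} and {f x, f y}
        have hd : ∀ a, a ∈ ({x, y} : Set A) → a ∈ ({f x, f y} : Set A) → False := by
          intro a ha hb
          simp only [Set.mem_insert_iff, Set.mem_singleton_iff] at ha hb
          have haK : a ∈ K := by
            rcases hb with rfl | rfl
            · exact hfK x
            · exact hfK y
          rcases ha with rfl | rfl
          · exact hx haK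
          · exact hy haK
        have hκ : blk2S ({x, y} : Set A) ({f x, f y} : Set A) hd ∈ ConOf f := by
          intro a b hab
          rcases hab with rfl | ⟨h1, h2⟩ | ⟨h1, h2⟩
          · exact Or.inl rfl
          · right; right
            simp only [Set.mem_insert_iff, Set.mem_singleton_iff] at h1 h2 ⊢
            constructor
            · rcases h1 with rfl | rfl
              · exact Or.inl rfl
              · exact Or.inr rfl
            · rcases h2 with rfl | rfl
              · exact Or.inl rfl
              · exact Or.inr rfl
          · left
            simp only [Set.mem_insert_iff, Set.mem_singleton_iff] at h1 h2
            have ha : f a = z := by rcases h1 with rfl | rfl; exacts [hconst x, hconst y]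
            have hb : f b = z := by rcases h2 with rfl | rfl; exacts [hconst x, hconst y]
            rw [ha, hb]
        have h1 : g x = g y ∨ (g x ∈ ({x, y} : Set A) ∧ g y ∈ ({x, y} : Set A)) ∨
            (g x ∈ ({f x, f y} : Set A) ∧ g y ∈ ({f x, f y} : Set A)) :=
          hsub hκ x y (Or.inr (Or.inl ⟨by simp, by simp⟩))
        rw [hgx] at h1
        rcases h1 with h1 | ⟨h1a, _⟩ | ⟨h1a, _⟩
        · exact hgy h1.symm
        · simp only [Set.mem_insert_iff, Set.mem_singleton_iff] at h1a
          rcases h1a with h | h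
          · exact hzx h
          · exact hzy h
        · simp only [Set.mem_insert_iff, Set.mem_singleton_iff] at h1a
          rcases h1a with h | h
          · exact hx h.symm
          · exact hy h.symm
    by_cases hcz : c = z
    · subst hcz
      by_cases hall : ∀ x, x ∉ K → g x = f x
      · have hgf : g = f := by
          funext x
          by_cases hx : x ∈ K
          · have hx' : f x = c := hx
            rw [hc x hx, hx']
          · exact hall x hx
        rw [hgf]
      · push_neg at hall
        obtain ⟨x, hx, hgfx⟩ := hall
        have hgxz : g x = c := by
          rcases G x hx with h | ⟨h, _⟩ | ⟨h, _⟩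
          · exact h
          · exact absurd h hgfx
          · exact h
        exfalso
        apply hg.2 c
        funext y
        show g y = c
        by_cases hy : y ∈ K
        · exact hc y hy
        · by_contra hgy
          exact mix x hx y hy hgxz hgy
    · -- c ≠ z
      by_cases hall : ∀ x, x ∉ K → g x = c
      · exfalso
        apply hg.2 c
        funext y
        show g y = c
        by_cases hy : y ∈ K
        · exact hc y hy
        · exact hall y hy
      · push_neg at hall
        obtain ⟨x₁, hx₁, hgx₁⟩ := hall
        have hx₁z : g x₁ = z := by
          rcases G x₁ hx₁ with h | ⟨_, h⟩ | ⟨h, _⟩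
          · exact absurd h hgx₁
          · exact absurd h hcz
          · exact h
        have key : ∀ x, x ∉ K → g x = z ∧ f x = c := by
          intro x hx
          by_cases hgx : g x = z
          · refine ⟨hgx, ?_⟩
            rcases G x hx with h | ⟨_, h⟩ | ⟨_, h⟩
            · rw [h] at hgx; exact absurd hgx hcz
            · exact absurd h hcz
            · exact h.symm
          · exact (mix x₁ hx₁ x hx hx₁z hgx).elim
        -- conclude: ConOf g ⊆ ConOf f
        intro κ hκ a b hab
        have hgab := hκ a b hab
        by_cases ha : a ∈ K <;> by_cases hb : b ∈ K
        · have hfa : f a = z := ha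
          have hfb : f b = z := hb
          rw [hfa, hfb]
        · have hfa : f a = z := ha
          rw [hfa, (key b hb).2]
          rw [hc a ha, (key b hb).1] at hgab
          exact κ.iseqv.symm hgab
        · have hfb : f b = z := hb
          rw [hfb, (key a ha).2]
          rw [(key a ha).1, hc b hb] at hgab
          exact κ.iseqv.symm hgab
        · rw [(key a ha).2, (key b hb).2]

/-- Type (II) functions give coatoms of the lattice of congruence lattices. -/
theorem typeII_coatom {A : Type*} [Fintype A]
    (f : A → A) (hnt : Nontriv f) (z : A)
    (hconst : ∀ x : A, f (f x) = z)
    (hker : 3 ≤ Set.ncard {x : A | f x = z}) :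
    ConOf f ≠ Set.univ ∧
      ¬ ∃ F : Set (A → A), ConOf f ⊂ ConSet F ∧ ConSet F ⊂ Set.univ := by
  have hfz : f z = z := by
    obtain ⟨x₀, hx₀⟩ : ({x : A | f x = z}).Nonempty :=
      Set.nonempty_of_ncard_ne_zero (by omega)
    have h1 := hconst x₀
    have h2 : f x₀ = z := hx₀
    rw [h2] at h1
    exact h1
  constructor
  · -- ConOf f ≠ univ
    obtain ⟨a, ha⟩ : ∃ a, f a ≠ z := by
      by_contra h
      push_neg at h
      exact hnt.2 z (funext h)
    have haz : a ≠ z := fun h => ha (by rw [h]; exact hfz)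
    intro hcon
    have hκ : blkS ({a, f a} : Set A) ∈ ConOf f := by rw [hcon]; exact Set.mem_univ _
    have h1 : f a = f (f a) ∨
        (f a ∈ ({a, f a} : Set A) ∧ f (f a) ∈ ({a, f a} : Set A)) :=
      hκ a (f a) (Or.inr ⟨by simp, by simp⟩)
    rw [hconst a] at h1
    rcases h1 with h | ⟨_, h2⟩
    · exact ha h
    · simp only [Set.mem_insert_iff, Set.mem_singleton_iff] at h2
      rcases h2 with h | h
      · exact haz h.symm
      · exact ha h.symm
  · rintro ⟨F, h1, h2⟩
    apply h2.2
    intro κ _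
    intro g hgF x y hxy
    by_cases hgnt : Nontriv g
    · exfalso
      have hsubg : ConOf f ⊆ ConOf g := by
        intro μ hμ
        exact fun a b h => (h1.1 hμ) g hgF a b h
      have hgf := key_lemma f z hconst hker g hgnt hsubg
      apply h1.2
      intro μ hμ
      exact hgf (fun a b h => hμ g hgF a b h)
    · unfold Nontriv at hgnt
      push_neg at hgnt
      by_cases hid : g = id
      · rw [hid]
        exact hxy
      · obtain ⟨c, hcg⟩ := hgnt hid
        rw [hcg]
end

section
/- Let A be a finite set and f a permutation of A with f^p = id for a prime p, such that f has at least two cycles of length p (type III). Then Con(A,f) is a coatom in the lattice of all congruence lattices on A. -/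
namespace TypeIII

variable {A : Type*}

/-- Setoid with a single nontrivial class `S`. -/
def oneClass (S : Set A) : Setoid A where
  r x y := x = y ∨ (x ∈ S ∧ y ∈ S)
  iseqv := by
    refine ⟨fun x => Or.inl rfl, ?_, ?_⟩
    · rintro x y (rfl | ⟨h1, h2⟩)
      · exact Or.inl rfl
      · exact Or.inr ⟨h2, h1⟩
    · rintro x y z (rfl | ⟨h1, h2⟩) h
      · exact h
      · rcases h with rfl | ⟨h3, h4⟩
        · exact Or.inr ⟨h1, h2⟩
        · exact Or.inr ⟨h1, h4⟩

lemma oneClass_r (S : Set A) (u v : A) :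
    (oneClass S).r u v ↔ (u = v ∨ (u ∈ S ∧ v ∈ S)) := Iff.rfl

lemma oneClass_mem (f : A → A) (S : Set A) (hS : ∀ x ∈ S, f x ∈ S) :
    oneClass S ∈ ConOf f := by
  intro x y h
  rw [oneClass_r] at h ⊢
  rcases h with rfl | ⟨h1, h2⟩
  · exact Or.inl rfl
  · exact Or.inr ⟨hS x h1, hS y h2⟩

variable (f : Equiv.Perm A) {p : ℕ}

lemma shift (hfp : f ^ p = 1) {m n : ℤ} (h : (p : ℤ) ∣ m - n) :
    (f ^ m : Equiv.Perm A) = f ^ n := by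
  obtain ⟨t, ht⟩ := h
  have hm : m = n + (p : ℤ) * t := by linarith
  subst hm
  rw [zpow_add, zpow_mul, zpow_natCast, hfp, one_zpow, mul_one]

lemma ord (hp : p.Prime) (hfp : f ^ p = 1) {x : A} (hx : f x ≠ x) {m n : ℤ}
    (h : (f ^ m) x = (f ^ n) x) : (p : ℤ) ∣ m - n := by
  by_contra hd
  set d := m - n with hdd
  have hdx : (f ^ d) x = x := by
    have h2 : (f ^ (-n)) ((f ^ m) x) = (f ^ (-n)) ((f ^ n) x) := by rw [h]
    rw [← Equiv.Perm.mul_apply, ← Equiv.Perm.mul_apply, ← zpow_add, ← zpow_add,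
      neg_add_cancel, zpow_zero] at h2
    rw [hdd, sub_eq_neg_add]
    exact h2.trans rfl
  have hpz : Prime ((p : ℤ)) := Nat.prime_iff_prime_int.mp hp
  obtain ⟨u, v, huv⟩ := hpz.coprime_iff_not_dvd.mpr hd
  apply hx
  have h1 : (f ^ (1 : ℤ)) x = x := by
    rw [← huv, zpow_add, Equiv.Perm.mul_apply]
    have hvp : (f ^ (v * d)) x = x := by
      rw [mul_comm, zpow_mul]
      exact Equiv.Perm.zpow_apply_eq_self_of_apply_eq_self hdx v
    have hup : (f ^ (u * (p : ℤ)) : Equiv.Perm A) = 1 := by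
      rw [mul_comm, zpow_mul, zpow_natCast, hfp, one_zpow]
    rw [hup, Equiv.Perm.one_apply, hvp]
  simpa using h1

lemma sameCycle_of_eq {x y : A} {m n : ℤ} (h : (f ^ m) x = (f ^ n) y) :
    f.SameCycle x y := by
  refine ⟨m - n, ?_⟩
  rw [sub_eq_neg_add, zpow_add, Equiv.Perm.mul_apply, h, ← Equiv.Perm.mul_apply,
    ← zpow_add, neg_add_cancel, zpow_zero, Equiv.Perm.one_apply]

lemma distinct {x y : A} (hc : ¬ f.SameCycle x y) (m n : ℤ) :
    (f ^ m) x ≠ (f ^ n) y := fun h => hc (sameCycle_of_eq f h)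

lemma nonfix_zpow {x : A} (hx : f x ≠ x) (n : ℤ) : f ((f ^ n) x) ≠ (f ^ n) x := by
  intro h
  apply hx
  have key : f ((f ^ n) x) = (f ^ n) (f x) := by
    rw [← Equiv.Perm.mul_apply, ← Equiv.Perm.mul_apply, ← zpow_one_add, ← zpow_add_one,
      add_comm]
  rw [key] at h
  exact (f ^ n).injective h

lemma apply_zpow {x : A} (n : ℤ) : f ((f ^ n) x) = (f ^ (1 + n)) x := by
  rw [zpow_one_add, Equiv.Perm.mul_apply]

/-- The pairing setoid between two distinct cycles. -/
def pairing (hp : p.Prime) (hfp : f ^ p = 1) {x y : A} (hx : f x ≠ x) (hy : f y ≠ y)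
    (hc : ¬ f.SameCycle x y) (c : ℤ) : Setoid A where
  r u v := u = v ∨ (∃ n : ℤ, u = (f ^ n) x ∧ v = (f ^ (n + c)) y) ∨
    (∃ n : ℤ, v = (f ^ n) x ∧ u = (f ^ (n + c)) y)
  iseqv := by
    refine ⟨fun u => Or.inl rfl, ?_, ?_⟩
    · rintro u v (rfl | ⟨n, h1, h2⟩ | ⟨n, h1, h2⟩)
      · exact Or.inl rfl
      · exact Or.inr (Or.inr ⟨n, h1, h2⟩)
      · exact Or.inr (Or.inl ⟨n, h1, h2⟩)
    · rintro u v w (rfl | ⟨n, h1, h2⟩ | ⟨n, h1, h2⟩) hvw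
      · exact hvw
      · rcases hvw with rfl | ⟨m, h3, h4⟩ | ⟨m, h3, h4⟩
        · exact Or.inr (Or.inl ⟨n, h1, h2⟩)
        · exact absurd (h3.symm.trans h2) (distinct f hc m (n + c))
        · -- h2 : v = f^(n+c) y, h4 : v = f^(m+c) y, h3 : w = f^m x
          have hd := ord f hp hfp hy (h2.symm.trans h4)
          have hd' : (p : ℤ) ∣ n - m := by
            obtain ⟨t, ht⟩ := hd; exact ⟨t, by linarith⟩
          have hs : (f ^ n : Equiv.Perm A) = f ^ m := shift f hfp hd'
          exact Or.inl (h1.trans (by rw [hs, ← h3]))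
      · rcases hvw with rfl | ⟨m, h3, h4⟩ | ⟨m, h3, h4⟩
        · exact Or.inr (Or.inr ⟨n, h1, h2⟩)
        · -- h1 : v = f^n x, h3 : v = f^m x, h2 : u = f^(n+c) y, h4 : w = f^(m+c) y
          have hd := ord f hp hfp hx (h1.symm.trans h3)
          have hd' : (p : ℤ) ∣ (n + c) - (m + c) := by
            obtain ⟨t, ht⟩ := hd; exact ⟨t, by linarith⟩
          have hs : (f ^ (n + c) : Equiv.Perm A) = f ^ (m + c) := shift f hfp hd'
          exact Or.inl (h2.trans (by rw [hs, ← h4]))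
        · exact absurd (h1.symm.trans h4) (distinct f hc n (m + c))

lemma pairing_r (hp : p.Prime) (hfp : f ^ p = 1) {x y : A} (hx : f x ≠ x) (hy : f y ≠ y)
    (hc : ¬ f.SameCycle x y) (c : ℤ) (u v : A) :
    (pairing f hp hfp hx hy hc c).r u v ↔
      (u = v ∨ (∃ n : ℤ, u = (f ^ n) x ∧ v = (f ^ (n + c)) y) ∨
        (∃ n : ℤ, v = (f ^ n) x ∧ u = (f ^ (n + c)) y)) := Iff.rfl

lemma pairing_mem (hp : p.Prime) (hfp : f ^ p = 1) {x y : A} (hx : f x ≠ x) (hy : f y ≠ y)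
    (hc : ¬ f.SameCycle x y) (c : ℤ) :
    pairing f hp hfp hx hy hc c ∈ ConOf ⇑f := by
  intro u v h
  rw [pairing_r] at h ⊢
  rcases h with rfl | ⟨n, rfl, rfl⟩ | ⟨n, rfl, rfl⟩
  · exact Or.inl rfl
  · refine Or.inr (Or.inl ⟨1 + n, apply_zpow f n, ?_⟩)
    rw [apply_zpow, add_assoc]
  · refine Or.inr (Or.inr ⟨1 + n, apply_zpow f n, ?_⟩)
    rw [apply_zpow, add_assoc]

lemma dichotomy {g : A → A} (hg : ConOf ⇑f ⊆ ConOf g) {x : A} (hx : f x ≠ x) :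
    (∀ n m : ℤ, g ((f ^ n) x) = g ((f ^ m) x)) ∨
      (∀ n : ℤ, ∃ m : ℤ, g ((f ^ n) x) = (f ^ m) x) := by
  set S : Set A := {u | ∃ m : ℤ, u = (f ^ m) x} with hSdef
  have hS : ∀ u ∈ S, f u ∈ S := by
    rintro u ⟨m, rfl⟩
    exact ⟨1 + m, apply_zpow f m⟩
  have hκ := hg (oneClass_mem (⇑f) S hS)
  by_cases hall : ∀ n : ℤ, ∃ m : ℤ, g ((f ^ n) x) = (f ^ m) x
  · exact Or.inr hall
  · push_neg at hall
    obtain ⟨n₀, h₀⟩ := hall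
    left
    have key : ∀ n : ℤ, g ((f ^ n) x) = g ((f ^ n₀) x) := by
      intro n
      have r1 : (oneClass S).r ((f ^ n) x) ((f ^ n₀) x) :=
        Or.inr ⟨⟨n, rfl⟩, ⟨n₀, rfl⟩⟩
      have r2 := hκ _ _ r1
      rw [oneClass_r] at r2
      rcases r2 with h | ⟨_, hh2⟩
      · exact h
      · obtain ⟨m, hm⟩ := hh2
        exact absurd hm (h₀ m)
    intro n m
    rw [key n, key m]

lemma transfer (hp : p.Prime) (hfp : f ^ p = 1) {g : A → A} (hg : ConOf ⇑f ⊆ ConOf g)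
    {x y : A} (hx : f x ≠ x) (hy : f y ≠ y) (hc : ¬ f.SameCycle x y) (c n : ℤ) :
    g ((f ^ n) x) = g ((f ^ (n + c)) y) ∨
    (∃ m : ℤ, g ((f ^ n) x) = (f ^ m) x ∧ g ((f ^ (n + c)) y) = (f ^ (m + c)) y) ∨
    (∃ m : ℤ, g ((f ^ (n + c)) y) = (f ^ m) x ∧ g ((f ^ n) x) = (f ^ (m + c)) y) := by
  have hκ := hg (pairing_mem f hp hfp hx hy hc c)
  have h := hκ _ _ ((pairing_r f hp hfp hx hy hc c _ _).mpr
    (Or.inr (Or.inl ⟨n, rfl, rfl⟩)))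
  rwa [pairing_r] at h

lemma sync (hp : p.Prime) (hfp : f ^ p = 1) {g : A → A} (hg : ConOf ⇑f ⊆ ConOf g)
    {x y : A} (hx : f x ≠ x) (hy : f y ≠ y) (hc : ¬ f.SameCycle x y)
    (hnc : ¬ ∀ n m : ℤ, g ((f ^ n) x) = g ((f ^ m) x)) :
    ∃ k : ℤ, (∀ n : ℤ, g ((f ^ n) x) = (f ^ (n + k)) x) ∧
      (∀ n : ℤ, g ((f ^ n) y) = (f ^ (n + k)) y) := by
  have hx2 : ∀ n : ℤ, ∃ m : ℤ, g ((f ^ n) x) = (f ^ m) x :=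
    (dichotomy f hg hx).resolve_left hnc
  have hy2 : ∀ n : ℤ, ∃ m : ℤ, g ((f ^ n) y) = (f ^ m) y := by
    refine (dichotomy f hg hy).resolve_left ?_
    intro hcy
    apply hnc
    by_cases hw : ∃ w : ℤ, g ((f ^ (0 : ℤ)) y) = (f ^ w) y
    · obtain ⟨w, hww⟩ := hw
      have key : ∀ n : ℤ, g ((f ^ n) x) = (f ^ w) x := by
        intro n
        rcases transfer f hp hfp hg hx hy hc 0 n with h | ⟨m, h1, h2⟩ | ⟨m, h1, h2⟩
        · obtain ⟨m, hm⟩ := hx2 n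
          have hcon : (f ^ m) x = (f ^ w) y := by rw [← hm, h, hcy (n + 0) 0, hww]
          exact absurd hcon (distinct f hc m w)
        · have h3 : (f ^ (m + 0)) y = (f ^ w) y := by rw [← h2, hcy (n + 0) 0, hww]
          have hd := ord f hp hfp hy h3
          have hs : (f ^ m : Equiv.Perm A) = f ^ w := by
            refine shift f hfp ?_
            obtain ⟨t, ht⟩ := hd; exact ⟨t, by linarith⟩
          rw [h1, hs]
        · have hcon : (f ^ m) x = (f ^ w) y := by rw [← h1, hcy (n + 0) 0, hww]
          exact absurd hcon (distinct f hc m w)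
      intro n n'
      rw [key n, key n']
    · push_neg at hw
      have key : ∀ n : ℤ, g ((f ^ n) x) = g ((f ^ (0 : ℤ)) y) := by
        intro n
        rcases transfer f hp hfp hg hx hy hc 0 n with h | ⟨m, h1, h2⟩ | ⟨m, h1, h2⟩
        · rw [h, hcy (n + 0) 0]
        · exact absurd ((hcy 0 (n + 0)).trans h2) (hw (m + 0))
        · obtain ⟨m', hm'⟩ := hx2 n
          exact absurd (hm'.symm.trans h2) (distinct f hc m' (m + 0))
      intro n n'
      rw [key n, key n']
  obtain ⟨k, hk⟩ := hx2 0
  have claim1 : ∀ c : ℤ, g ((f ^ c) y) = (f ^ (c + k)) y := by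
    intro c
    rcases transfer f hp hfp hg hx hy hc c 0 with h | ⟨m, h1, h2⟩ | ⟨m, h1, h2⟩
    · obtain ⟨m', hm'⟩ := hy2 (0 + c)
      have hcon : (f ^ k) x = (f ^ m') y := by rw [← hk, h, hm']
      exact absurd hcon (distinct f hc k m')
    · have hd := ord f hp hfp hx (h1.symm.trans hk)
      have hs : (f ^ (m + c) : Equiv.Perm A) = f ^ (c + k) := by
        refine shift f hfp ?_
        obtain ⟨t, ht⟩ := hd; exact ⟨t, by linarith⟩
      rw [zero_add] at h2
      rw [h2, hs]
    · obtain ⟨m', hm'⟩ := hy2 (0 + c)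
      exact absurd (h1.symm.trans hm') (fun he => distinct f hc m m' he)
  have claim2 : ∀ n : ℤ, g ((f ^ n) x) = (f ^ (n + k)) x := by
    intro n
    rcases transfer f hp hfp hg hx hy hc 0 n with h | ⟨m, h1, h2⟩ | ⟨m, h1, h2⟩
    · obtain ⟨m', hm'⟩ := hx2 n
      have hcon : (f ^ m') x = (f ^ ((n + 0) + k)) y := by
        rw [← hm', h, claim1 (n + 0)]
      exact absurd hcon (distinct f hc m' ((n + 0) + k))
    · have h3 : (f ^ (m + 0)) y = (f ^ ((n + 0) + k)) y := by
        rw [← h2, claim1 (n + 0)]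
      have hd := ord f hp hfp hy h3
      have hs : (f ^ m : Equiv.Perm A) = f ^ (n + k) := by
        refine shift f hfp ?_
        obtain ⟨t, ht⟩ := hd; exact ⟨t, by linarith⟩
      rw [h1, hs]
    · obtain ⟨m', hm'⟩ := hx2 n
      exact absurd (hm'.symm.trans h2) (distinct f hc m' (m + 0))
  exact ⟨k, claim2, claim1⟩

lemma const_eq (hp : p.Prime) (hfp : f ^ p = 1) {g : A → A} (hg : ConOf ⇑f ⊆ ConOf g)
    {x y : A} (hx : f x ≠ x) (hy : f y ≠ y) (hc : ¬ f.SameCycle x y)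
    (hcx : ∀ n m : ℤ, g ((f ^ n) x) = g ((f ^ m) x))
    (hcy : ∀ n m : ℤ, g ((f ^ n) y) = g ((f ^ m) y)) :
    g x = g y := by
  by_contra hne
  have hpgt : (1 : ℤ) < (p : ℤ) := by exact_mod_cast hp.one_lt
  have hnotone : ¬ (p : ℤ) ∣ 1 := by
    intro hdv
    have := Int.le_of_dvd one_pos hdv
    omega
  have hgx : ∀ n : ℤ, g ((f ^ n) x) = g x := by
    intro n
    have h := hcx n 0
    simpa using h
  have hgy : ∀ n : ℤ, g ((f ^ n) y) = g y := by
    intro n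
    have h := hcy n 0
    simpa using h
  have t0 := transfer f hp hfp hg hx hy hc 0 0
  have t1 := transfer f hp hfp hg hx hy hc 1 0
  rw [hgx 0, hgy (0 + 0)] at t0
  rw [hgx 0, hgy (0 + 1)] at t1
  rcases t0 with h | ⟨m0, h1, h2⟩ | ⟨m0, h1, h2⟩
  · exact hne h
  · rcases t1 with h | ⟨m1, h3, h4⟩ | ⟨m1, h3, h4⟩
    · exact hne h
    · have d1 := ord f hp hfp hx (h1.symm.trans h3)
      have d2 := ord f hp hfp hy (h2.symm.trans h4)
      refine hnotone ?_
      obtain ⟨t, ht⟩ := d1; obtain ⟨s, hs⟩ := d2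
      exact ⟨t - s, by linarith⟩
    · exact absurd (h1.symm.trans h4) (distinct f hc m0 (m1 + 1))
  · rcases t1 with h | ⟨m1, h3, h4⟩ | ⟨m1, h3, h4⟩
    · exact hne h
    · exact absurd (h3.symm.trans h2) (distinct f hc m1 (m0 + 0))
    · have d1 := ord f hp hfp hx (h1.symm.trans h3)
      have d2 := ord f hp hfp hy (h2.symm.trans h4)
      refine hnotone ?_
      obtain ⟨t, ht⟩ := d1; obtain ⟨s, hs⟩ := d2
      exact ⟨t - s, by linarith⟩

lemma mem_both {a b z w : A} (ha : f a ≠ a) (hcyc : ¬ f.SameCycle a b) (hz : f z = z)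
    (h1 : (∃ m : ℤ, w = (f ^ m) a) ∨ w = z)
    (h2 : (∃ m : ℤ, w = (f ^ m) b) ∨ w = z) : w = z := by
  rcases h1 with ⟨m, rfl⟩ | rfl
  · rcases h2 with ⟨m', he⟩ | he
    · exact absurd he (distinct f hcyc m m')
    · exfalso
      apply nonfix_zpow f ha m
      rw [he]
      exact hz
  · rfl

lemma pow_preserve {σ : Equiv.Perm A} {κ : Setoid A} (h : κ ∈ ConOf ⇑σ) (u : ℕ) :
    κ ∈ ConOf ⇑(σ ^ u) := by
  induction u with
  | zero => intro x y hxy; simpa using hxy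
  | succ n ih =>
    intro x y hxy
    rw [pow_succ', Equiv.Perm.mul_apply, Equiv.Perm.mul_apply]
    exact h _ _ (ih x y hxy)

lemma classify (hp : p.Prime) (hfp : f ^ p = 1) {a b : A} (ha : f a ≠ a) (hb : f b ≠ b)
    (hcyc : ¬ f.SameCycle a b) {g : A → A} (hg : ConOf ⇑f ⊆ ConOf g) :
    (∀ z : A, g z = g a) ∨ ∃ k : ℤ, ∀ z : A, g z = (f ^ k) z := by
  have hcyc' : ¬ f.SameCycle b a := fun h => hcyc h.symm
  have honep : ¬ (p : ℤ) ∣ 1 := by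
    intro hdv
    have h1 := Int.le_of_dvd one_pos hdv
    have h2 : (1 : ℤ) < (p : ℤ) := by exact_mod_cast hp.one_lt
    omega
  have fixrel : ∀ (x z : A), f x ≠ x → f z = z →
      ∀ n : ℤ, g ((f ^ n) x) = g z ∨
        (((∃ m : ℤ, g ((f ^ n) x) = (f ^ m) x) ∨ g ((f ^ n) x) = z) ∧
         ((∃ m : ℤ, g z = (f ^ m) x) ∨ g z = z)) := by
    intro x z hx hz n
    set S : Set A := {u | (∃ m : ℤ, u = (f ^ m) x) ∨ u = z} with hSdef
    have hS : ∀ u ∈ S, f u ∈ S := by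
      rintro u (⟨m, rfl⟩ | rfl)
      · exact Or.inl ⟨1 + m, apply_zpow f m⟩
      · exact Or.inr hz
    have hκ := hg (oneClass_mem (⇑f) S hS)
    have r1 : (oneClass S).r ((f ^ n) x) z := Or.inr ⟨Or.inl ⟨n, rfl⟩, Or.inr rfl⟩
    have r2 := hκ _ _ r1
    rw [oneClass_r] at r2
    exact r2
  by_cases hca : ∀ n m : ℤ, g ((f ^ n) a) = g ((f ^ m) a)
  · left
    have hcb : ∀ n m : ℤ, g ((f ^ n) b) = g ((f ^ m) b) := by
      by_contra hnb
      obtain ⟨k, _, hk2⟩ := sync f hp hfp hg hb ha hcyc' hnb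
      have h01 := hca 0 1
      rw [hk2 0, hk2 1] at h01
      have hd := ord f hp hfp ha h01
      have he : ((0:ℤ) + k) - (1 + k) = -1 := by ring
      rw [he] at hd
      exact honep (dvd_neg.mp hd)
    have hvab : g a = g b := const_eq f hp hfp hg ha hb hcyc hca hcb
    intro z
    by_cases hz : f z = z
    · have ra := fixrel a z ha hz 0
      have rb := fixrel b z hb hz 0
      have h0a : ((f ^ (0:ℤ)) a) = a := by simp
      have h0b : ((f ^ (0:ℤ)) b) = b := by simp
      rw [h0a] at ra
      rw [h0b] at rb
      rcases ra with h | ⟨hga, hgz_a⟩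
      · exact h.symm
      rcases rb with h | ⟨hgb, hgz_b⟩
      · rw [← hvab] at h; exact h.symm
      have hgb' : (∃ m : ℤ, g a = (f ^ m) b) ∨ g a = z := by rw [hvab]; exact hgb
      have hzga : g a = z := mem_both f ha hcyc hz hga hgb'
      have hzgz : g z = z := mem_both f ha hcyc hz hgz_a hgz_b
      rw [hzgz, hzga]
    · by_cases haz : f.SameCycle a z
      · obtain ⟨j, hj⟩ := haz
        rw [← hj]
        have h := hca j 0
        simpa using h
      · have haz' : ¬ f.SameCycle z a := fun h => haz h.symm
        have hcz : ∀ n m : ℤ, g ((f ^ n) z) = g ((f ^ m) z) := by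
          by_contra hnz
          obtain ⟨k, _, hk2⟩ := sync f hp hfp hg hz ha haz' hnz
          have h01 := hca 0 1
          rw [hk2 0, hk2 1] at h01
          have hd := ord f hp hfp ha h01
          have he : ((0:ℤ) + k) - (1 + k) = -1 := by ring
          rw [he] at hd
          exact honep (dvd_neg.mp hd)
        exact const_eq f hp hfp hg hz ha haz' hcz hca
  · right
    obtain ⟨k, hka, hkb⟩ := sync f hp hfp hg ha hb hcyc hca
    refine ⟨k, ?_⟩
    intro z
    by_cases hz : f z = z
    · have ra := fixrel a z ha hz 0
      have rb := fixrel b z hb hz 0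
      have h0a := hka 0
      have h0b := hkb 0
      rw [h0a] at ra
      rw [h0b] at rb
      have hga_mem : (∃ m : ℤ, g z = (f ^ m) a) ∨ g z = z := by
        rcases ra with h | ⟨_, h2⟩
        · exact Or.inl ⟨0 + k, h.symm⟩
        · exact h2
      have hgb_mem : (∃ m : ℤ, g z = (f ^ m) b) ∨ g z = z := by
        rcases rb with h | ⟨_, h2⟩
        · exact Or.inl ⟨0 + k, h.symm⟩
        · exact h2
      have hgz : g z = z := mem_both f ha hcyc hz hga_mem hgb_mem
      rw [hgz]
      exact (Equiv.Perm.zpow_apply_eq_self_of_apply_eq_self hz k).symm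
    · by_cases haz : f.SameCycle a z
      · obtain ⟨j, hj⟩ := haz
        rw [← hj, hka j, add_comm j k, zpow_add, Equiv.Perm.mul_apply]
      · obtain ⟨k', hk'a, hk'z⟩ := sync f hp hfp hg ha hz haz hca
        have hd := ord f hp hfp ha ((hk'a 0).symm.trans (hka 0))
        have hs : (f ^ ((0:ℤ) + k') : Equiv.Perm A) = f ^ k := by
          refine shift f hfp ?_
          obtain ⟨t, ht⟩ := hd; exact ⟨t, by linarith⟩
        have h0 := hk'z 0
        have hz0 : ((f ^ (0:ℤ)) z) = z := by simp
        rw [hz0] at h0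
        rw [h0, hs]

end TypeIII

open TypeIII in
/-- Type (III) permutations give coatoms of the lattice of congruence lattices:
`f^p = id` for a prime `p` and `f` has at least two cycles of length `p`
(equivalently, two non-fixed points in different cycles). -/
theorem typeIII_coatom {A : Type*} [Fintype A] [DecidableEq A]
    (f : Equiv.Perm A) (p : ℕ) (hp : p.Prime) (hfp : f ^ p = 1)
    (a b : A) (ha : f a ≠ a) (hb : f b ≠ b) (hcyc : ¬ f.SameCycle a b) :
    ConOf (⇑f) ≠ Set.univ ∧
      ¬ ∃ F : Set (A → A), ConOf (⇑f) ⊂ ConSet F ∧ ConSet F ⊂ Set.univ := by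
  constructor
  · intro h
    have hmem : oneClass {u | u = a ∨ u = b} ∈ ConOf ⇑f := h ▸ Set.mem_univ _
    have hr := hmem a b ((oneClass_r _ _ _).mpr (Or.inr ⟨Or.inl rfl, Or.inr rfl⟩))
    rw [oneClass_r] at hr
    rcases hr with h1 | ⟨h1, _⟩
    · have hab : a = b := f.injective h1
      exact hcyc (hab ▸ Equiv.Perm.SameCycle.refl f a)
    · rcases h1 with h1 | h1
      · exact ha h1
      · exact hcyc ⟨1, by simpa using h1⟩
  · rintro ⟨F, h1, h2⟩
    obtain ⟨κ, hκF⟩ : ∃ κ : Setoid A, κ ∉ ConSet F := by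
      by_contra hall
      push_neg at hall
      exact h2.ne (Set.eq_univ_iff_forall.mpr hall)
    simp only [ConSet, Set.mem_setOf_eq, not_forall] at hκF
    obtain ⟨g, hgF, x, y, hxy, hngxy⟩ := hκF
    have hgcon : ConOf ⇑f ⊆ ConOf g := by
      intro κ' hκ'
      have hκ'F : κ' ∈ ConSet F := h1.subset hκ'
      exact fun u v huv => hκ'F g hgF u v huv
    rcases classify f hp hfp ha hb hcyc hgcon with hconst | ⟨k, hk⟩
    · apply hngxy
      rw [hconst x, hconst y]
      try exact κ.iseqv.refl _
    · by_cases hdk : (p : ℤ) ∣ k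
      · have hid : (f ^ k : Equiv.Perm A) = f ^ (0 : ℤ) := shift f hfp (by simpa using hdk)
        apply hngxy
        rw [hk x, hk y, hid]
        simpa using hxy
      · have hpz : Prime ((p : ℤ)) := Nat.prime_iff_prime_int.mp hp
        obtain ⟨u, v, huv⟩ := hpz.coprime_iff_not_dvd.mpr hdk
        set w : ℤ := v % (p : ℤ) with hw
        have hp0 : (0 : ℤ) < (p : ℤ) := by exact_mod_cast hp.pos
        have hwnn : 0 ≤ w := Int.emod_nonneg v (ne_of_gt hp0)
        have hdvd : (p : ℤ) ∣ k * w - 1 := by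
          have h3 : (p : ℤ) ∣ v - w := ⟨v / (p : ℤ), by rw [hw, Int.emod_def]; ring⟩
          obtain ⟨t, ht⟩ := h3
          exact ⟨-(k * t) - u, by linear_combination (-k) * ht + huv⟩
        set wn : ℕ := w.toNat with hwndef
        have hwn : (wn : ℤ) = w := Int.toNat_of_nonneg hwnn
        have hfeq : (f ^ (k * w) : Equiv.Perm A) = f := by
          have hsh := shift f hfp (m := k * w) (n := 1) (by simpa using hdvd)
          simpa using hsh
        have hsub : ConSet F ⊆ ConOf ⇑f := by
          intro κ' hκ'
          have hκ'g : κ' ∈ ConOf g := fun u' v' h' => hκ' g hgF u' v' h'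
          have hκ'fk : κ' ∈ ConOf ⇑(f ^ k : Equiv.Perm A) := by
            intro u' v' h'
            have hres := hκ'g u' v' h'
            rwa [hk u', hk v'] at hres
          have hpow := pow_preserve hκ'fk wn
          have hcast : ((f ^ k : Equiv.Perm A) ^ wn : Equiv.Perm A) = f := by
            rw [← zpow_natCast (f ^ k : Equiv.Perm A) wn, ← zpow_mul, hwn, hfeq]
          rwa [hcast] at hpow
        exact h1.not_subset hsub
end

section
/- Let A be a finite set and f a permutation of A of prime power order p^m which has at least two cycles of length p^m. Let g : A → A be nontrivial with Con(A,f) ⊆ Con(A,g). Then there exists k with 1 ≤ k ≤ p^m − 1 such that g = f^k. -/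
namespace PowAux

open Equiv Equiv.Perm

variable {A : Type*} [Fintype A] [DecidableEq A]

private lemma zcomp (f : Equiv.Perm A) (i k : ℤ) (w : A) :
    (f ^ i) ((f ^ k) w) = (f ^ (i + k)) w := by
  rw [zpow_add, Equiv.Perm.mul_apply]

private lemma dvd3 {d x1 x2 x3 y : ℤ} (h1 : d ∣ x1) (h2 : d ∣ x2) (h3 : d ∣ x3)
    (h : y = x1 + x2 + x3) : d ∣ y := h ▸ dvd_add (dvd_add h1 h2) h3

private lemma dvd4 {d x1 x2 x3 x4 y : ℤ} (h1 : d ∣ x1) (h2 : d ∣ x2) (h3 : d ∣ x3)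
    (h4 : d ∣ x4) (h : y = x1 + x2 + x3 + x4) : d ∣ y :=
  h ▸ dvd_add (dvd_add (dvd_add h1 h2) h3) h4

private lemma not_sameCycle_zpow_ne (f : Equiv.Perm A) {u v : A}
    (h : ¬ f.SameCycle u v) (i i' : ℤ) : (f ^ i) u ≠ (f ^ i') v := by
  intro he
  exact h ⟨(-i') + i, by rw [← zcomp, he, zcomp]; simp⟩

/-- The pairing relation between the orbit of `u` and the orbit of `v`, with
modulus `d` and shift `j`. -/
abbrev pr (f : Equiv.Perm A) (u v : A) (d : ℕ) (j : ℤ) (y z : A) : Prop :=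
  y = z
  ∨ (∃ i i' : ℤ, y = (f ^ i) u ∧ z = (f ^ i') u ∧ (d : ℤ) ∣ i - i')
  ∨ (∃ i i' : ℤ, y = (f ^ i) v ∧ z = (f ^ i') v ∧ (d : ℤ) ∣ i - i')
  ∨ (∃ i i' : ℤ, y = (f ^ i) u ∧ z = (f ^ i') v ∧ (d : ℤ) ∣ i + j - i')
  ∨ (∃ i i' : ℤ, y = (f ^ i) v ∧ z = (f ^ i') u ∧ (d : ℤ) ∣ i' + j - i)

lemma pr_preserved (f : Equiv.Perm A) (g : A → A) (u v : A) (d : ℕ) (j : ℤ)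
    (hu : ∀ i i' : ℤ, (f ^ i) u = (f ^ i') u → (d : ℤ) ∣ i - i')
    (hv : ∀ i i' : ℤ, (f ^ i) v = (f ^ i') v → (d : ℤ) ∣ i - i')
    (huv : ∀ i i' : ℤ, (f ^ i) u ≠ (f ^ i') v)
    (hcon : ConOf ⇑f ⊆ ConOf g) :
    ∀ y z, pr f u v d j y z → pr f u v d j (g y) (g z) := by
  have fstep : ∀ (i : ℤ) (w : A), f ((f ^ i) w) = (f ^ (1 + i)) w := by
    intro i w
    have := zcomp f 1 i w
    rwa [zpow_one] at this
  have hrefl : ∀ y, pr f u v d j y y := fun y => Or.inl rfl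
  have hsymm : ∀ {y z}, pr f u v d j y z → pr f u v d j z y := by
    rintro y z (h | ⟨i, i', h1, h2, h3⟩ | ⟨i, i', h1, h2, h3⟩ | ⟨i, i', h1, h2, h3⟩ |
      ⟨i, i', h1, h2, h3⟩)
    · exact Or.inl h.symm
    · exact Or.inr (Or.inl ⟨i', i, h2, h1, dvd_sub_comm.1 h3⟩)
    · exact Or.inr (Or.inr (Or.inl ⟨i', i, h2, h1, dvd_sub_comm.1 h3⟩))
    · exact Or.inr (Or.inr (Or.inr (Or.inr ⟨i', i, h2, h1, h3⟩)))
    · exact Or.inr (Or.inr (Or.inr (Or.inl ⟨i', i, h2, h1, h3⟩)))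
  have htrans : ∀ {x y z}, pr f u v d j x y → pr f u v d j y z → pr f u v d j x z := by
    intro x y z hxy hyz
    rcases hxy with h | hxy'
    · exact h ▸ hyz
    rcases hyz with h | hyz'
    · exact h ▸ Or.inr hxy'
    rcases hxy' with ⟨i1, i2, h1, h2, h3⟩ | ⟨i1, i2, h1, h2, h3⟩ | ⟨i1, i2, h1, h2, h3⟩ |
      ⟨i1, i2, h1, h2, h3⟩ <;>
      rcases hyz' with ⟨k1, k2, h1', h2', h3'⟩ | ⟨k1, k2, h1', h2', h3'⟩ |
        ⟨k1, k2, h1', h2', h3'⟩ | ⟨k1, k2, h1', h2', h3'⟩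
    -- uu, uu
    · exact Or.inr (Or.inl ⟨i1, k2, h1, h2', dvd3 h3 (hu _ _ (h2.symm.trans h1')) h3' (by ring)⟩)
    -- uu, vv
    · exact absurd (h2.symm.trans h1') (huv _ _)
    -- uu, uv
    · exact Or.inr (Or.inr (Or.inr (Or.inl ⟨i1, k2, h1, h2',
        dvd3 h3 (hu _ _ (h2.symm.trans h1')) h3' (by ring)⟩)))
    -- uu, vu
    · exact absurd (h2.symm.trans h1') (huv _ _)
    -- vv, uu
    · exact absurd (h1'.symm.trans h2) (huv _ _)
    -- vv, vv
    · exact Or.inr (Or.inr (Or.inl ⟨i1, k2, h1, h2',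
        dvd3 h3 (hv _ _ (h2.symm.trans h1')) h3' (by ring)⟩))
    -- vv, uv
    · exact absurd (h1'.symm.trans h2) (huv _ _)
    -- vv, vu
    · exact Or.inr (Or.inr (Or.inr (Or.inr ⟨i1, k2, h1, h2',
        dvd3 h3' (dvd_sub_comm.1 (hv _ _ (h2.symm.trans h1'))) (dvd_sub_comm.1 h3) (by ring)⟩)))
    -- uv, uu
    · exact absurd (h1'.symm.trans h2) (huv _ _)
    -- uv, vv
    · exact Or.inr (Or.inr (Or.inr (Or.inl ⟨i1, k2, h1, h2',
        dvd3 h3 (hv _ _ (h2.symm.trans h1')) h3' (by ring)⟩)))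
    -- uv, uv
    · exact absurd (h1'.symm.trans h2) (huv _ _)
    -- uv, vu
    · exact Or.inr (Or.inl ⟨i1, k2, h1, h2',
        dvd3 h3 (hv _ _ (h2.symm.trans h1')) (dvd_neg.2 h3') (by ring)⟩)
    -- vu, uu
    · exact Or.inr (Or.inr (Or.inr (Or.inr ⟨i1, k2, h1, h2',
        dvd3 h3 (dvd_neg.2 (hu _ _ (h2.symm.trans h1'))) (dvd_neg.2 h3') (by ring)⟩)))
    -- vu, vv
    · exact absurd (h2.symm.trans h1') (huv _ _)
    -- vu, uv
    · exact Or.inr (Or.inr (Or.inl ⟨i1, k2, h1, h2',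
        dvd3 (dvd_neg.2 h3) (hu _ _ (h2.symm.trans h1')) h3' (by ring)⟩))
    -- vu, vu
    · exact absurd (h2.symm.trans h1') (huv _ _)
  have hinv : ∀ y z, pr f u v d j y z → pr f u v d j (f y) (f z) := by
    rintro y z (h | ⟨i, i', h1, h2, h3⟩ | ⟨i, i', h1, h2, h3⟩ | ⟨i, i', h1, h2, h3⟩ |
      ⟨i, i', h1, h2, h3⟩)
    · exact Or.inl (by rw [h])
    · exact Or.inr (Or.inl ⟨1 + i, 1 + i', by rw [h1, fstep], by rw [h2, fstep],
        dvd3 h3 (dvd_zero _) (dvd_zero _) (by ring)⟩)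
    · exact Or.inr (Or.inr (Or.inl ⟨1 + i, 1 + i', by rw [h1, fstep], by rw [h2, fstep],
        dvd3 h3 (dvd_zero _) (dvd_zero _) (by ring)⟩))
    · exact Or.inr (Or.inr (Or.inr (Or.inl ⟨1 + i, 1 + i', by rw [h1, fstep],
        by rw [h2, fstep], dvd3 h3 (dvd_zero _) (dvd_zero _) (by ring)⟩)))
    · exact Or.inr (Or.inr (Or.inr (Or.inr ⟨1 + i, 1 + i', by rw [h1, fstep],
        by rw [h2, fstep], dvd3 h3 (dvd_zero _) (dvd_zero _) (by ring)⟩)))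
  have hmem : (⟨pr f u v d j, hrefl, @hsymm, @htrans⟩ : Setoid A) ∈ ConOf ⇑f := hinv
  exact fun y z h => hcon hmem y z h

lemma orb_preserved (f : Equiv.Perm A) (g : A → A) (hcon : ConOf ⇑f ⊆ ConOf g) (u : A) :
    ∀ y z, (y = z ∨ (f.SameCycle u y ∧ f.SameCycle u z)) →
      (g y = g z ∨ (f.SameCycle u (g y) ∧ f.SameCycle u (g z))) := by
  have hmem : (⟨fun y z => y = z ∨ (f.SameCycle u y ∧ f.SameCycle u z),
      fun y => Or.inl rfl,
      by rintro y z (h | ⟨h1, h2⟩); exacts [Or.inl h.symm, Or.inr ⟨h2, h1⟩],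
      by rintro x y z (h | ⟨h1, h2⟩) h'
         · exact h ▸ h'
         · rcases h' with h' | ⟨h1', h2'⟩
           · exact Or.inr ⟨h1, h' ▸ h2⟩
           · exact Or.inr ⟨h1, h2'⟩⟩ : Setoid A) ∈ ConOf ⇑f := by
    rintro y z (h | ⟨h1, h2⟩)
    · exact Or.inl (by rw [h])
    · exact Or.inr ⟨sameCycle_apply_right.2 h1, sameCycle_apply_right.2 h2⟩
  exact fun y z h => hcon hmem y z h

lemma dichot (f : Equiv.Perm A) (g : A → A) (hcon : ConOf ⇑f ⊆ ConOf g) (u : A) :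
    (∃ c, ∀ i : ℤ, g ((f ^ i) u) = c) ∨ (∀ i : ℤ, f.SameCycle u (g ((f ^ i) u))) := by
  by_cases h : ∀ i : ℤ, f.SameCycle u (g ((f ^ i) u))
  · exact Or.inr h
  · left
    push_neg at h
    obtain ⟨i0, hi0⟩ := h
    refine ⟨g ((f ^ i0) u), fun i => ?_⟩
    rcases orb_preserved f g hcon u ((f ^ i) u) ((f ^ i0) u)
        (Or.inr ⟨⟨i, rfl⟩, ⟨i0, rfl⟩⟩) with h' | ⟨_, h2⟩
    · exact h'
    · exact absurd h2 hi0

private lemma exact_period (f : Equiv.Perm A) (x : A) (hx : f x ≠ x) (i i' : ℤ) :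
    (f ^ i) x = (f ^ i') x ↔ ((f.cycleOf x).support.card : ℤ) ∣ i - i' := by
  rw [(f.isCycleOn_support_cycleOf x).zpow_apply_eq_zpow_apply
    (mem_support_cycleOf_iff.2 ⟨SameCycle.refl f x, mem_support.2 hx⟩),
    Int.modEq_iff_dvd, dvd_sub_comm]

/-- The key lemma for the constant case: if `g` is constant on the orbit of `a`, then
`g` is constant everywhere. -/
lemma const_case (f : Equiv.Perm A) (g : A → A) (n : ℕ) (hn2 : 2 ≤ n)
    (hcon : ConOf ⇑f ⊆ ConOf g) (a b : A) (hab : ¬ f.SameCycle a b)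
    (hEa : ∀ i i' : ℤ, (f ^ i) a = (f ^ i') a ↔ (n : ℤ) ∣ i - i')
    (hEb : ∀ i i' : ℤ, (f ^ i) b = (f ^ i') b ↔ (n : ℤ) ∣ i - i')
    (hper : ∀ x : A, ∃ d : ℕ, (d : ℤ) ∣ (n : ℤ) ∧
      ∀ i i' : ℤ, (f ^ i) x = (f ^ i') x ↔ (d : ℤ) ∣ i - i')
    (c : A) (hc : ∀ i : ℤ, g ((f ^ i) a) = c) :
    ∀ x : A, g x = c := by
  have djab := not_sameCycle_zpow_ne f hab
  have hua : ∀ i i' : ℤ, (f ^ i) a = (f ^ i') a → (n : ℤ) ∣ i - i' := fun i i' h => (hEa i i').1 h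
  have hub : ∀ i i' : ℤ, (f ^ i) b = (f ^ i') b → (n : ℤ) ∣ i - i' := fun i i' h => (hEb i i').1 h
  -- Part (i): g is constant on the orbit of b as well
  have hb' : ∀ j : ℤ, g ((f ^ j) b) = c := by
    intro j
    have prG0 := pr_preserved f g a b n 0 hua hub djab hcon
    have prG1 := pr_preserved f g a b n 1 hua hub djab hcon
    have H0 := prG0 ((f ^ j) a) ((f ^ j) b)
      (Or.inr (Or.inr (Or.inr (Or.inl ⟨j, j, rfl, rfl, by simp⟩))))
    rw [hc j] at H0
    have H1 := prG1 ((f ^ (j - 1)) a) ((f ^ j) b)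
      (Or.inr (Or.inr (Or.inr (Or.inl ⟨j - 1, j, rfl, rfl,
        by rw [show j - 1 + 1 - j = (0 : ℤ) from by ring]; exact dvd_zero _⟩))))
    rw [hc (j - 1)] at H1
    rcases H0 with h | ⟨i1, i2, h1, h2, h3⟩ | ⟨i1, i2, h1, h2, h3⟩ | ⟨i1, i2, h1, h2, h3⟩ |
      ⟨i1, i2, h1, h2, h3⟩
    · exact h.symm
    · rw [h2, h1]; exact ((hEa i1 i2).2 h3).symm
    · rw [h2, h1]; exact ((hEb i1 i2).2 h3).symm
    · -- c = f^i1 a, g (f^j b) = f^i2 b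
      rcases H1 with h' | ⟨k1, k2, h1', h2', h3'⟩ | ⟨k1, k2, h1', h2', h3'⟩ |
        ⟨k1, k2, h1', h2', h3'⟩ | ⟨k1, k2, h1', h2', h3'⟩
      · exact absurd (h1.symm.trans (h'.trans h2)) (djab _ _)
      · exact absurd (h2'.symm.trans h2) (djab _ _)
      · exact absurd (h1.symm.trans h1') (djab _ _)
      · exfalso
        have e1 : (n : ℤ) ∣ i1 - k1 := (hEa i1 k1).1 (h1.symm.trans h1')
        have e2 : (n : ℤ) ∣ i2 - k2 := (hEb i2 k2).1 (h2.symm.trans h2')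
        have hd1 : (n : ℤ) ∣ -1 :=
          dvd4 h3 (dvd_neg.2 h3') (dvd_neg.2 e1) e2 (by ring)
        have := Int.le_of_dvd one_pos (dvd_neg.1 hd1)
        omega
      · exact absurd (h1.symm.trans h1') (djab _ _)
    · -- c = f^i1 b, g (f^j b) = f^i2 a
      rcases H1 with h' | ⟨k1, k2, h1', h2', h3'⟩ | ⟨k1, k2, h1', h2', h3'⟩ |
        ⟨k1, k2, h1', h2', h3'⟩ | ⟨k1, k2, h1', h2', h3'⟩
      · exact absurd ((h'.trans h2).symm.trans h1) (djab _ _)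
      · exact absurd (h1'.symm.trans h1) (djab _ _)
      · exact absurd (h2'.symm.trans h2).symm (djab _ _)
      · exact absurd (h1'.symm.trans h1) (djab _ _)
      · exfalso
        have e1 : (n : ℤ) ∣ i1 - k1 := (hEb i1 k1).1 (h1.symm.trans h1')
        have e2 : (n : ℤ) ∣ i2 - k2 := (hEa i2 k2).1 (h2.symm.trans h2')
        have hd1 : (n : ℤ) ∣ -1 :=
          dvd4 h3 (dvd_neg.2 h3') (dvd_neg.2 e2) e1 (by ring)
        have := Int.le_of_dvd one_pos (dvd_neg.1 hd1)
        omega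
  -- Part (ii): g is constant everywhere
  intro x
  by_cases hax : f.SameCycle a x
  · obtain ⟨i, hi⟩ := hax; rw [← hi]; exact hc i
  by_cases hbx : f.SameCycle b x
  · obtain ⟨i, hi⟩ := hbx; rw [← hi]; exact hb' i
  obtain ⟨d, hdn, hEx⟩ := hper x
  have dja := not_sameCycle_zpow_ne f hax
  have djb := not_sameCycle_zpow_ne f hbx
  have prA := pr_preserved f g a x d 0 (fun i i' h => dvd_trans hdn (hua i i' h))
    (fun i i' h => (hEx i i').1 h) dja hcon
  have prB := pr_preserved f g b x d 0 (fun i i' h => dvd_trans hdn (hub i i' h))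
    (fun i i' h => (hEx i i').1 h) djb hcon
  have HA := prA a x (Or.inr (Or.inr (Or.inr (Or.inl ⟨0, 0, by simp, by simp, by simp⟩))))
  rw [show g a = c from by simpa using hc 0] at HA
  have HB := prB b x (Or.inr (Or.inr (Or.inr (Or.inl ⟨0, 0, by simp, by simp, by simp⟩))))
  rw [show g b = c from by simpa using hb' 0] at HB
  rcases HA with h | ⟨i1, i2, h1, h2, h3⟩ | ⟨i1, i2, h1, h2, h3⟩ | ⟨i1, i2, h1, h2, h3⟩ |
    ⟨i1, i2, h1, h2, h3⟩
  · exact h.symm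
  · -- c = f^i1 a
    rcases HB with h' | ⟨k1, k2, h1', h2', h3'⟩ | ⟨k1, k2, h1', h2', h3'⟩ |
      ⟨k1, k2, h1', h2', h3'⟩ | ⟨k1, k2, h1', h2', h3'⟩
    · exact h'.symm
    · exact absurd (h1'.symm.trans h1).symm (djab _ _)
    · exact absurd (h1.symm.trans h1') (dja _ _)
    · exact absurd (h1'.symm.trans h1).symm (djab _ _)
    · exact absurd (h1.symm.trans h1') (dja _ _)
  · -- c = f^i1 x, g x = f^i2 x
    rw [h2, h1]; exact ((hEx i1 i2).2 h3).symm
  · -- c = f^i1 a, g x = f^i2 x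
    rcases HB with h' | ⟨k1, k2, h1', h2', h3'⟩ | ⟨k1, k2, h1', h2', h3'⟩ |
      ⟨k1, k2, h1', h2', h3'⟩ | ⟨k1, k2, h1', h2', h3'⟩
    · exact h'.symm
    · exact absurd (h1'.symm.trans h1).symm (djab _ _)
    · exact absurd (h1.symm.trans h1') (dja _ _)
    · exact absurd (h1'.symm.trans h1).symm (djab _ _)
    · exact absurd (h1.symm.trans h1') (dja _ _)
  · -- c = f^i1 x, g x = f^i2 a
    rcases HB with h' | ⟨k1, k2, h1', h2', h3'⟩ | ⟨k1, k2, h1', h2', h3'⟩ |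
      ⟨k1, k2, h1', h2', h3'⟩ | ⟨k1, k2, h1', h2', h3'⟩
    · exact h'.symm
    · exact absurd (h1'.symm.trans h1) (djb _ _)
    · exact absurd (h2.symm.trans h2') (dja _ _)
    · exact absurd (h1'.symm.trans h1) (djb _ _)
    · exact absurd (h2'.symm.trans h2).symm (djab _ _)

end PowAux

open PowAux Equiv Equiv.Perm in
theorem power_of_prime_power_perm {A : Type*} [Fintype A] [DecidableEq A]
    (f : Equiv.Perm A) (p m : ℕ) (hp : p.Prime)
    (horder : orderOf f = p ^ m)
    (a b : A) (hcyc : ¬ f.SameCycle a b)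
    (ha : (f.cycleOf a).support.card = p ^ m)
    (hb : (f.cycleOf b).support.card = p ^ m)
    (g : A → A) (hg : Nontriv g) (hcon : ConOf (⇑f) ⊆ ConOf g) :
    ∃ k : ℕ, 1 ≤ k ∧ k ≤ p ^ m - 1 ∧ g = ⇑(f ^ k) := by
  classical
  set n := p ^ m with hn
  have hnpos : 0 < n := pow_pos hp.pos m
  have hfa : f a ≠ a := by
    intro h
    have h0 : (f.cycleOf a).support.card = 0 := by
      rw [(Equiv.Perm.cycleOf_eq_one_iff f).2 h]; simp
    rw [ha] at h0; omega
  have hfb : f b ≠ b := by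
    intro h
    have h0 : (f.cycleOf b).support.card = 0 := by
      rw [(Equiv.Perm.cycleOf_eq_one_iff f).2 h]; simp
    rw [hb] at h0; omega
  have hEa : ∀ i i' : ℤ, (f ^ i) a = (f ^ i') a ↔ (n : ℤ) ∣ i - i' := by
    intro i i'; rw [← ha]; exact exact_period f a hfa i i'
  have hEb : ∀ i i' : ℤ, (f ^ i) b = (f ^ i') b ↔ (n : ℤ) ∣ i - i' := by
    intro i i'; rw [← hb]; exact exact_period f b hfb i i'
  have hn2 : 2 ≤ n := by
    have := two_le_card_support_cycleOf_iff.2 hfa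
    rw [ha] at this; exact this
  have hfn1 : f ^ n = 1 := by rw [← horder]; exact pow_orderOf_eq_one f
  have hper : ∀ x : A, ∃ d : ℕ, (d : ℤ) ∣ (n : ℤ) ∧
      ∀ i i' : ℤ, (f ^ i) x = (f ^ i') x ↔ (d : ℤ) ∣ i - i' := by
    intro x
    by_cases hfx : f x = x
    · refine ⟨1, one_dvd _, fun i i' => ?_⟩
      constructor
      · intro _; simp
      · intro _
        rw [Equiv.Perm.zpow_apply_eq_self_of_apply_eq_self hfx i,
          Equiv.Perm.zpow_apply_eq_self_of_apply_eq_self hfx i']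
    · refine ⟨(f.cycleOf x).support.card, ?_, exact_period f x hfx⟩
      have h1 : ((f : Equiv.Perm A) ^ ((n : ℕ) : ℤ)) x = ((f : Equiv.Perm A) ^ (0 : ℤ)) x := by
        rw [zpow_natCast, zpow_zero, hfn1]
      have := (exact_period f x hfx _ _).1 h1
      simpa using this
  rcases dichot f g hcon a with ⟨c, hc⟩ | hsca
  · exact absurd (funext (const_case f g n hn2 hcon a b hcyc hEa hEb hper c hc))
      (hg.2 c)
  rcases dichot f g hcon b with ⟨c, hc⟩ | hscb
  · have hba : ¬ f.SameCycle b a := fun h => hcyc h.symm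
    exact absurd (funext (const_case f g n hn2 hcon b a hba hEb hEa hper c hc))
      (hg.2 c)
  obtain ⟨s, hs⟩ := hsca 0
  rw [show ((f : Equiv.Perm A) ^ (0 : ℤ)) a = a from by simp] at hs
  have djab := not_sameCycle_zpow_ne f hcyc
  -- g agrees with f^s on the orbit of b
  have stepB : ∀ j : ℤ, g ((f ^ j) b) = (f ^ (s + j)) b := by
    intro j
    have prG := pr_preserved f g a b n j (fun i i' h => (hEa i i').1 h)
      (fun i i' h => (hEb i i').1 h) djab hcon
    have H := prG a ((f ^ j) b)
      (Or.inr (Or.inr (Or.inr (Or.inl ⟨0, j, by simp, rfl, by simp⟩))))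
    rw [← hs] at H
    obtain ⟨t, ht⟩ := hscb j
    rw [← ht] at H
    rcases H with h | ⟨i1, i2, h1, h2, h3⟩ | ⟨i1, i2, h1, h2, h3⟩ | ⟨i1, i2, h1, h2, h3⟩ |
      ⟨i1, i2, h1, h2, h3⟩
    · exact absurd h (djab _ _)
    · exact absurd h2.symm (djab _ _)
    · exact absurd h1 (djab _ _)
    · rw [← ht]
      refine (hEb t (s + j)).2 ?_
      exact dvd3 ((hEb t i2).1 h2) (dvd_neg.2 h3) ((hEa i1 s).1 h1.symm) (by ring)
    · exact absurd h1 (djab _ _)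
  have stepC : ∀ i : ℤ, g ((f ^ i) a) = (f ^ (s + i)) a := by
    intro i
    have prG := pr_preserved f g a b n 0 (fun i i' h => (hEa i i').1 h)
      (fun i i' h => (hEb i i').1 h) djab hcon
    have H := prG ((f ^ i) a) ((f ^ i) b)
      (Or.inr (Or.inr (Or.inr (Or.inl ⟨i, i, rfl, rfl, by simp⟩))))
    rw [stepB i] at H
    obtain ⟨t, ht⟩ := hsca i
    rw [← ht] at H
    rcases H with h | ⟨i1, i2, h1, h2, h3⟩ | ⟨i1, i2, h1, h2, h3⟩ | ⟨i1, i2, h1, h2, h3⟩ |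
      ⟨i1, i2, h1, h2, h3⟩
    · exact absurd h (djab _ _)
    · exact absurd h2.symm (djab _ _)
    · exact absurd h1 (djab _ _)
    · rw [← ht]
      refine (hEa t (s + i)).2 ?_
      exact dvd3 ((hEa t i1).1 h1) (by simpa using h3) (dvd_neg.2 ((hEb (s + i) i2).1 h2))
        (by ring)
    · exact absurd h1 (djab _ _)
  have stepD : ∀ x, ¬ f.SameCycle a x → ¬ f.SameCycle b x → g x = (f ^ s) x := by
    intro x hax hbx
    obtain ⟨d, hdn, hEx⟩ := hper x
    have dja := not_sameCycle_zpow_ne f hax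
    have djb := not_sameCycle_zpow_ne f hbx
    have prA := pr_preserved f g a x d 0 (fun i i' h => dvd_trans hdn ((hEa i i').1 h))
      (fun i i' h => (hEx i i').1 h) dja hcon
    have prB := pr_preserved f g b x d 0 (fun i i' h => dvd_trans hdn ((hEb i i').1 h))
      (fun i i' h => (hEx i i').1 h) djb hcon
    have HA := prA a x (Or.inr (Or.inr (Or.inr (Or.inl ⟨0, 0, by simp, by simp, by simp⟩))))
    rw [← hs] at HA
    have HB := prB b x (Or.inr (Or.inr (Or.inr (Or.inl ⟨0, 0, by simp, by simp, by simp⟩))))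
    have hgb : g b = (f ^ s) b := by simpa using stepB 0
    rw [hgb] at HB
    rcases HA with h | ⟨i1, i2, h1, h2, h3⟩ | ⟨i1, i2, h1, h2, h3⟩ | ⟨i1, i2, h1, h2, h3⟩ |
      ⟨i1, i2, h1, h2, h3⟩
    · -- f^s a = g x : impossible via HB
      exfalso
      rcases HB with h' | ⟨k1, k2, h1', h2', h3'⟩ | ⟨k1, k2, h1', h2', h3'⟩ |
        ⟨k1, k2, h1', h2', h3'⟩ | ⟨k1, k2, h1', h2', h3'⟩
      · exact djab _ _ (h.trans h'.symm)
      · exact djab _ _ (h.trans h2')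
      · exact djb _ _ h1'
      · exact dja _ _ (h.trans h2')
      · exact djb _ _ h1'
    · -- g x = f^i2 a : impossible via HB
      exfalso
      rcases HB with h' | ⟨k1, k2, h1', h2', h3'⟩ | ⟨k1, k2, h1', h2', h3'⟩ |
        ⟨k1, k2, h1', h2', h3'⟩ | ⟨k1, k2, h1', h2', h3'⟩
      · exact djab _ _ (h'.trans h2).symm
      · exact djab _ _ (h2.symm.trans h2')
      · exact djb _ _ h1'
      · exact dja _ _ (h2.symm.trans h2')
      · exact djb _ _ h1'
    · exact absurd h1 (dja _ _)
    · -- f^s a = f^i1 a, g x = f^i2 x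
      rw [h2]
      refine (hEx i2 s).2 ?_
      exact dvd3 (dvd_neg.2 (by simpa using h3))
        (dvd_neg.2 (dvd_trans hdn ((hEa s i1).1 h1))) (dvd_zero _) (by ring)
    · exact absurd h1 (dja _ _)
  have hall : ∀ x, g x = (f ^ s) x := by
    intro x
    by_cases hax : f.SameCycle a x
    · obtain ⟨i, hi⟩ := hax
      rw [← hi, stepC i]; exact (zcomp f s i a).symm
    by_cases hbx : f.SameCycle b x
    · obtain ⟨i, hi⟩ := hbx
      rw [← hi, stepB i]; exact (zcomp f s i b).symm
    · exact stepD x hax hbx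
  have hnz : (0 : ℤ) < (n : ℤ) := by exact_mod_cast hnpos
  set k : ℕ := (s % (n : ℤ)).toNat with hkdef
  have hk' : (k : ℤ) = s % (n : ℤ) := Int.toNat_of_nonneg (Int.emod_nonneg s (by omega))
  have hfk : ((f : Equiv.Perm A) ^ s) = f ^ (k : ℤ) := by
    conv_lhs => rw [← Int.emod_add_mul_ediv s (n : ℤ)]
    rw [zpow_add, zpow_mul,
      show (f : Equiv.Perm A) ^ ((n : ℕ) : ℤ) = 1 from by rw [zpow_natCast, hfn1],
      one_zpow, mul_one, hk']
  have hgk : g = ⇑(f ^ k) := by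
    funext x; rw [hall x, hfk, zpow_natCast]
  refine ⟨k, ?_, ?_, hgk⟩
  · by_contra hk0
    have hk0' : k = 0 := by omega
    apply hg.1
    funext x
    rw [hgk, hk0']
    simp
  · have hlt : s % (n : ℤ) < n := Int.emod_lt_of_pos s hnz
    omega
end

section
/- Let A be a finite set and f a permutation of A of prime power order p^m with at least two cycles of length p^m. Then End(Con(A,f)) = End(Quord(A,f)): a function h : A → A preserves all equivalence relations compatible with f if and only if it preserves all quasiorders compatible with f. -/
/-- The quasiorder lattice of a single function: reflexive transitive relations
compatible with `f`. -/
def QuordOf {A : Type*} (f : A → A) : Set (A → A → Prop) :=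
  {q | Reflexive q ∧ Transitive q ∧ ∀ x y : A, q x y → q (f x) (f y)}

namespace EndConQuord

variable {A : Type*}

/-- A point whose orbit has full length: any power of `f` fixing it is trivial. -/
def Full (f : Equiv.Perm A) (z : A) : Prop := ∀ i : ℤ, (f ^ i) z = z → f ^ i = 1

lemma apply_zpow (f : Equiv.Perm A) (i : ℤ) (x : A) :
    f ((f ^ i) x) = (f ^ (i + 1)) x := by
  rw [add_comm, zpow_add, zpow_one, Equiv.Perm.mul_apply]

lemma zpow_apply_succ (f : Equiv.Perm A) (i : ℤ) (x : A) :
    (f ^ i) (f x) = (f ^ (i + 1)) x := by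
  rw [zpow_add, zpow_one, Equiv.Perm.mul_apply]

lemma sc_of_eq {f : Equiv.Perm A} {x v : A} {i : ℤ} (h : v = (f ^ i) x) :
    f.SameCycle x v := ⟨i, h.symm⟩

lemma sc_apply (f : Equiv.Perm A) (x : A) : f.SameCycle x (f x) :=
  ⟨1, by rw [zpow_one]⟩

lemma zpow_eq_of_full {f : Equiv.Perm A} {z : A} (hz : Full f z) {i j : ℤ}
    (hij : (f ^ i) z = (f ^ j) z) : f ^ i = f ^ j := by
  have h1 : (f ^ (i - j)) z = z := by
    apply (f ^ j).injective
    rw [← Equiv.Perm.mul_apply, ← zpow_add]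
    have hij' : j + (i - j) = i := by ring
    rw [hij', hij]
  have h2 := hz _ h1
  have h3 : f ^ i = f ^ (j + (i - j)) := by norm_num
  rw [h3, zpow_add, h2, mul_one]

lemma full_of_sameCycle {f : Equiv.Perm A} {z y : A} (hz : Full f z)
    (hy : f.SameCycle z y) : Full f y := by
  obtain ⟨r, rfl⟩ := hy
  intro i hi
  apply hz
  apply (f ^ r).injective
  calc (f ^ r) ((f ^ i) z) = (f ^ r * f ^ i) z := by rw [Equiv.Perm.mul_apply]
    _ = (f ^ i * f ^ r) z := by rw [← zpow_add, ← zpow_add, add_comm]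
    _ = (f ^ i) ((f ^ r) z) := by rw [Equiv.Perm.mul_apply]
    _ = (f ^ r) z := hi

lemma fz_ne_of_full {f : Equiv.Perm A} {z w : A} (hz : Full f z) (hw : f w ≠ w) :
    f z ≠ z := by
  intro hfz
  have h1 : (f ^ (1 : ℤ)) z = z := by rwa [zpow_one]
  have := hz _ h1
  rw [zpow_one] at this
  rw [this] at hw
  exact hw rfl

/-- Collapse-an-orbit relation. -/
def orbR (f : Equiv.Perm A) (z : A) : A → A → Prop :=
  fun u v => u = v ∨ (f.SameCycle z u ∧ f.SameCycle z v)

lemma orb_equiv (f : Equiv.Perm A) (z : A) : Equivalence (orbR f z) := by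
  constructor
  · intro u; exact Or.inl rfl
  · rintro u v (rfl | ⟨h1, h2⟩)
    · exact Or.inl rfl
    · exact Or.inr ⟨h2, h1⟩
  · rintro u v w (rfl | ⟨h1, h2⟩) hvw
    · exact hvw
    · rcases hvw with rfl | ⟨h3, h4⟩
      · exact Or.inr ⟨h1, h2⟩
      · exact Or.inr ⟨h1, h4⟩

lemma orb_compat (f : Equiv.Perm A) (z : A) :
    ∀ u v, orbR f z u v → orbR f z (f u) (f v) := by
  rintro u v (rfl | ⟨⟨i, hi⟩, ⟨j, hj⟩⟩)
  · exact Or.inl rfl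
  · exact Or.inr ⟨⟨i + 1, by rw [← apply_zpow, hi]⟩, ⟨j + 1, by rw [← apply_zpow, hj]⟩⟩

/-- Gluing relation: glue the orbit of `x` to the (full) orbit of `z`. -/
def glueR (f : Equiv.Perm A) (x z : A) : A → A → Prop :=
  fun u v => u = v ∨ ∃ i j : ℤ,
    (u = (f ^ i) x ∨ u = (f ^ i) z) ∧ (v = (f ^ j) x ∨ v = (f ^ j) z) ∧
      (f ^ i) x = (f ^ j) x

lemma glue_equiv {f : Equiv.Perm A} {x z : A} (hxz : ¬ f.SameCycle x z)
    (hz : Full f z) : Equivalence (glueR f x z) := by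
  constructor
  · intro u; exact Or.inl rfl
  · rintro u v (rfl | ⟨i, j, hu, hv, hij⟩)
    · exact Or.inl rfl
    · exact Or.inr ⟨j, i, hv, hu, hij.symm⟩
  · rintro u v w (rfl | ⟨i, j, hu, hv, hij⟩) hvw
    · exact hvw
    · rcases hvw with rfl | ⟨i', j', hv', hw, hij'⟩
      · exact Or.inr ⟨i, j, hu, hv, hij⟩
      · refine Or.inr ⟨i, j', hu, hw, ?_⟩
        have key : (f ^ j) x = (f ^ i') x := by
          rcases hv with hv | hv <;> rcases hv' with hv' | hv'
          · rw [← hv, hv']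
          · -- v = f^j x and v = f^{i'} z : contradiction with ¬ SameCycle x z
            exact absurd ((sc_of_eq hv).trans
              (sc_of_eq hv').symm) hxz
          · -- v = f^j z and v = f^{i'} x : contradiction
            exact absurd ((sc_of_eq hv').trans
              (sc_of_eq hv).symm) hxz
          · have : f ^ j = f ^ i' := zpow_eq_of_full hz (by rw [← hv, hv'])
            exact congrArg (fun g : Equiv.Perm A => g x) this
        exact hij.trans (key.trans hij')

lemma glue_compat (f : Equiv.Perm A) (x z : A) :
    ∀ u v, glueR f x z u v → glueR f x z (f u) (f v) := by
  rintro u v (rfl | ⟨i, j, hu, hv, hij⟩)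
  · exact Or.inl rfl
  · refine Or.inr ⟨i + 1, j + 1, ?_, ?_, ?_⟩
    · rcases hu with rfl | rfl
      · exact Or.inl (apply_zpow f i x) 
      · exact Or.inr (apply_zpow f i z)
    · rcases hv with rfl | rfl
      · exact Or.inl (apply_zpow f j x)
      · exact Or.inr (apply_zpow f j z)
    · rw [← apply_zpow, ← apply_zpow, hij]

lemma glue_rel_self (f : Equiv.Perm A) (x z : A) : glueR f x z x z :=
  Or.inr ⟨0, 0, Or.inl (by simp), Or.inr (by simp), rfl⟩

section Main

variable {f : Equiv.Perm A} {h : A → A}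

/-- Specification extracted from preservation of a gluing congruence. -/
lemma glue_spec (H : ∀ κ ∈ ConOf (⇑f), ∀ x y : A, κ.r x y → κ.r (h x) (h y))
    {x z : A} (hxz : ¬ f.SameCycle x z) (hz : Full f z) :
    h x = h z ∨ ∃ i j : ℤ,
      (h x = (f ^ i) x ∨ h x = (f ^ i) z) ∧ (h z = (f ^ j) x ∨ h z = (f ^ j) z) ∧
        (f ^ i) x = (f ^ j) x := by
  exact H ⟨glueR f x z, glue_equiv hxz hz⟩ (glue_compat f x z) x z (glue_rel_self f x z)

/-- Specification extracted from preservation of an orbit-collapsing congruence. -/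
lemma orb_spec (H : ∀ κ ∈ ConOf (⇑f), ∀ x y : A, κ.r x y → κ.r (h x) (h y))
    {z x : A} (hzx : f.SameCycle z x) :
    h z = h x ∨ (f.SameCycle z (h z) ∧ f.SameCycle z (h x)) := by
  exact H ⟨orbR f z, orb_equiv f z⟩ (orb_compat f z) z x
    (Or.inr ⟨Equiv.Perm.SameCycle.refl f z, hzx⟩)

/-- Step B for the power case. -/
lemma pow_step (H : ∀ κ ∈ ConOf (⇑f), ∀ x y : A, κ.r x y → κ.r (h x) (h y))
    {w : A} {k : ℤ} (hw : Full f w) (hk : h w = (f ^ k) w)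
    {x : A} (hxw : ¬ f.SameCycle x w) :
    h x = (f ^ k) x ∨ f.SameCycle w (h x) := by
  rcases glue_spec H hxw hw with heq | ⟨i, j, hu, hv, hij⟩
  · right; rw [heq, hk]; exact ⟨k, rfl⟩
  · rcases hv with hv | hv
    · -- h w = f^j x : contradicts ¬ SameCycle x w
      exfalso
      have h1 : f.SameCycle x (h w) := ⟨j, hv.symm⟩
      have h2 : f.SameCycle w (h w) := by rw [hk]; exact ⟨k, rfl⟩
      exact hxw (h1.trans h2.symm)
    · -- h w = f^j w, so f^j = f^k
      have hjk : f ^ j = f ^ k := zpow_eq_of_full hw (by rw [← hv, hk])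
      rcases hu with hu | hu
      · left
        rw [hu, hij]
        exact congrArg (fun g : Equiv.Perm A => g x) hjk
      · right; rw [hu]; exact ⟨i, rfl⟩

/-- The power case: if `h a` is on `a`'s cycle and `h b` on `b`'s cycle,
then `h` is a power of `f`. -/
lemma pow_case (H : ∀ κ ∈ ConOf (⇑f), ∀ x y : A, κ.r x y → κ.r (h x) (h y))
    {a b : A} (hab : ¬ f.SameCycle a b) (hfa : Full f a) (hfb : Full f b)
    (haa : f.SameCycle a (h a)) (hbb : f.SameCycle b (h b)) :
    ∃ k : ℤ, ∀ x, h x = (f ^ k) x := by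
  -- Step A : find k with h a = f^k a and h b = f^k b
  obtain ⟨k, hak, hbk⟩ : ∃ k : ℤ, h a = (f ^ k) a ∧ h b = (f ^ k) b := by
    rcases glue_spec H hab hfb with heq | ⟨i, j, hu, hv, hij⟩
    · exfalso; exact hab (haa.trans (heq ▸ hbb).symm)
    · rcases hu with hu | hu
      · rcases hv with hv | hv
        · exfalso
          exact hab ((sc_of_eq hv).trans hbb.symm)
        · refine ⟨j, ?_, hv⟩
          rw [hu, hij]
      · exfalso
        exact hab (haa.trans (sc_of_eq hu).symm)
  refine ⟨k, fun x => ?_⟩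
  by_cases hxa : f.SameCycle x a
  · -- x on a's cycle
    have hxb : ¬ f.SameCycle x b := fun hh => hab (hxa.symm.trans hh)
    rcases pow_step H hfb hbk hxb with h1 | h1
    · exact h1
    · exfalso
      -- show SameCycle a (h x), contradiction with SameCycle b (h x)
      have hahx : f.SameCycle a (h x) := by
        rcases orb_spec H hxa.symm with heq | ⟨_, h3⟩
        · rw [← heq]; exact haa
        · exact h3
      exact hab (hahx.trans h1.symm)
  · by_cases hxb : f.SameCycle x b
    · rcases pow_step H hfa hak hxa with h1 | h1
      · exact h1
      · exfalso
        have hbhx : f.SameCycle b (h x) := by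
          rcases orb_spec H hxb.symm with heq | ⟨_, h3⟩
          · rw [← heq]; exact hbb
          · exact h3
        exact hab (h1.trans hbhx.symm)
    · rcases pow_step H hfa hak hxa with h1 | h1
      · exact h1
      · rcases pow_step H hfb hbk hxb with h2 | h2
        · exact h2
        · exact absurd (h1.trans h2.symm) hab

/-- The constant case: if `h a` is off `a`'s cycle then `h` is constant. -/
lemma const_case (H : ∀ κ ∈ ConOf (⇑f), ∀ x y : A, κ.r x y → κ.r (h x) (h y))
    {a b : A} (hab : ¬ f.SameCycle a b) (hfa : Full f a) (hfb : Full f b)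
    (hfa' : f a ≠ a) (hna : ¬ f.SameCycle a (h a)) :
    ∀ x, h x = h a := by
  have hba : ¬ f.SameCycle b a := fun hh => hab hh.symm
  -- Step A : h is constant on a's cycle
  have stepA : ∀ x, f.SameCycle a x → h x = h a := by
    intro x hax
    rcases orb_spec H hax with heq | ⟨h1, _⟩
    · exact heq.symm
    · exact absurd h1 hna
  -- Step B : h is constant (= h a) on b's cycle
  have stepB : ∀ y, f.SameCycle b y → h y = h a := by
    by_contra hcon
    push_neg at hcon
    obtain ⟨y0, hby0, hy0⟩ := hcon
    -- from the gluing of y0 with a's cycle: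
    have hy0a : ¬ f.SameCycle y0 a := fun hh => hab (hh.symm.trans hby0.symm)
    have B0 : f.SameCycle a (h y0) := by
      rcases glue_spec H hy0a hfa with heq | ⟨i, j, hu, hv, hij⟩
      · exact absurd heq hy0
      · rcases hv with hv | hv
        · -- h a = f^j y0
          rcases hu with hu | hu
          · exfalso
            apply hy0
            rw [hu, hij, ← hv]
          · rw [hu]; exact ⟨i, rfl⟩
        · exact absurd (sc_of_eq hv : f.SameCycle a (h a)) hna
    -- h is constant on b's cycle with value h y0, which is on a's cycle
    have hconstb : ∀ y, f.SameCycle b y → h y = h y0 := by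
      intro y hby
      rcases orb_spec H (hby0.symm.trans hby) with heq | ⟨h1, _⟩
      · exact heq.symm
      · exfalso
        exact hab ((B0.trans h1.symm).trans hby0.symm)
    have hbval : h b = h y0 := hconstb b (Equiv.Perm.SameCycle.refl f b)
    have hhb_on_a : f.SameCycle a (h b) := by rw [hbval]; exact B0
    have hhb_ne : h a ≠ h b := by
      intro hh; exact hy0 (by rw [← hbval, ← hh])
    -- glue a with b : h a = f^i b, h b = f^j a, f^i = f^j
    obtain ⟨i, hi, hj⟩ : ∃ i : ℤ, h a = (f ^ i) b ∧ h b = (f ^ i) a := by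
      rcases glue_spec H hab hfb with heq | ⟨i, j, hu, hv, hij⟩
      · exact absurd heq hhb_ne
      · rcases hu with hu | hu
        · exact absurd (sc_of_eq hu : f.SameCycle a (h a)) hna
        · rcases hv with hv | hv
          · -- h b = f^j a ; and f^i a = f^j a so f^i = f^j
            have : f ^ i = f ^ j := zpow_eq_of_full hfa hij
            exact ⟨i, hu, by rw [this]; exact hv⟩
          · exfalso
            exact hab (hhb_on_a.trans (sc_of_eq hv).symm)
    -- glue (f a) with b : forces f = 1, contradiction
    have hfab : ¬ f.SameCycle (f a) b := by
      intro hh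
      exact hab ((sc_apply f a).trans hh)
    have hhfa : h (f a) = h a := stepA _ (sc_apply f a)
    rcases glue_spec H hfab hfb with heq | ⟨i', j', hu', hv', hij'⟩
    · rw [hhfa] at heq; exact hhb_ne heq
    · rw [hhfa] at hu'
      rcases hu' with hu' | hu'
      · exfalso
        apply hna
        have : (f ^ i') (f a) = (f ^ (i' + 1)) a := zpow_apply_succ f i' a
        rw [hu', this]
        exact ⟨i' + 1, rfl⟩
      · rcases hv' with hv' | hv'
        · -- h b = f^{j'} (f a) = f^{j'+1} a
          have e1 : f ^ i' = f ^ i := zpow_eq_of_full hfb (by rw [← hu', hi])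
          have e2 : (f ^ (j' + 1)) a = (f ^ i) a := by
            rw [← zpow_apply_succ f j' a, ← hv', hj]
          have e3 : f ^ (j' + 1) = f ^ i := zpow_eq_of_full hfa e2
          have e4 : f ^ i' = f ^ j' := by
            apply zpow_eq_of_full (full_of_sameCycle hfa (sc_apply f a))
            exact hij'
          -- f^{j'+1} = f^i = f^{i'} = f^{j'}
          have e5 : f ^ (j' + 1) = f ^ j' := by rw [e3, ← e1, e4]
          have e6 : f = 1 := by
            have : f ^ j' * f = f ^ j' * 1 := by
              rw [mul_one, ← zpow_add_one, e5]
            exact mul_left_cancel this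
          exact hfa' (by rw [e6]; rfl)
        · exfalso
          exact hab (hhb_on_a.trans (sc_of_eq hv').symm)
  -- Step C : general x
  intro x
  by_cases hax : f.SameCycle a x
  · exact stepA x hax
  · by_cases hbx : f.SameCycle b x
    · exact stepB x hbx
    · -- x in neither big cycle
      have hxa : ¬ f.SameCycle x a := fun hh => hax hh.symm
      have hxb : ¬ f.SameCycle x b := fun hh => hbx hh.symm
      -- C1 : h x = h a or SameCycle a (h x)
      have C1 : h x = h a ∨ f.SameCycle a (h x) := by
        rcases glue_spec H hxa hfa with heq | ⟨i, j, hu, hv, hij⟩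
        · exact Or.inl heq
        · rcases hv with hv | hv
          · -- h a = f^j x
            rcases hu with hu | hu
            · left; rw [hu, hij, ← hv]
            · right; rw [hu]; exact ⟨i, rfl⟩
          · exact absurd (sc_of_eq hv : f.SameCycle a (h a)) hna
      rcases C1 with hC | hC
      · exact hC
      · -- SameCycle a (h x) : use gluing with b to conclude
        have hhb : h b = h a := stepB b (Equiv.Perm.SameCycle.refl f b)
        rcases glue_spec H hxb hfb with heq | ⟨i, j, hu, _, _⟩
        · rw [heq, hhb]
        · exfalso
          rcases hu with hu | hu
          · exact hxa ((sc_of_eq hu).trans hC.symm)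
          · exact hab (hC.trans (sc_of_eq hu).symm)

end Main

end EndConQuord

theorem end_con_eq_end_quord {A : Type*} [Fintype A] [DecidableEq A]
    (f : Equiv.Perm A) (p m : ℕ) (hp : p.Prime)
    (horder : orderOf f = p ^ m)
    (a b : A) (hcyc : ¬ f.SameCycle a b)
    (ha : (f.cycleOf a).support.card = p ^ m)
    (hb : (f.cycleOf b).support.card = p ^ m) :
    ∀ h : A → A,
      (∀ κ ∈ ConOf (⇑f), ∀ x y : A, κ.r x y → κ.r (h x) (h y)) ↔
      (∀ q ∈ QuordOf (⇑f), ∀ x y : A, q x y → q (h x) (h y)) := by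
  classical
  intro h
  -- basic facts
  have hpm_pos : 0 < p ^ m := pow_pos hp.pos m
  have hfa' : f a ≠ a := by
    intro hh
    have : f.cycleOf a = 1 := (Equiv.Perm.cycleOf_eq_one_iff f).mpr hh
    rw [this] at ha
    simp at ha
    omega
  have hfb' : f b ≠ b := by
    intro hh
    have : f.cycleOf b = 1 := (Equiv.Perm.cycleOf_eq_one_iff f).mpr hh
    rw [this] at hb
    simp at hb
    omega
  have hord_pos : 0 < orderOf f := by rw [horder]; exact hpm_pos
  -- fullness of a and b
  have full_of : ∀ z : A, f z ≠ z → (f.cycleOf z).support.card = p ^ m →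
      EndConQuord.Full f z := by
    intro z hz hcard i hi
    have hcyc' : (f.cycleOf z).IsCycle := f.isCycle_cycleOf hz
    have hordc : orderOf (f.cycleOf z) = p ^ m := by
      rw [hcyc'.orderOf, hcard]
    -- reduce i to a natural number
    set n : ℕ := (i % (orderOf f : ℤ)).toNat with hn
    have hmod_nonneg : 0 ≤ i % (orderOf f : ℤ) :=
      Int.emod_nonneg i (by exact_mod_cast hord_pos.ne')
    have hmod_lt : i % (orderOf f : ℤ) < (orderOf f : ℤ) :=
      Int.emod_lt_of_pos i (by exact_mod_cast hord_pos)
    have hfi : f ^ i = f ^ n := by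
      rw [← zpow_natCast f n, hn, Int.toNat_of_nonneg hmod_nonneg, zpow_mod_orderOf]
    have hn_lt : n < p ^ m := by
      rw [← horder]
      omega
    rw [hfi] at hi ⊢
    have hfix : ((f.cycleOf z) ^ n) z = z := by
      rw [Equiv.Perm.cycleOf_pow_apply_self]; exact hi
    have hcz : (f.cycleOf z) z ≠ z := by
      rw [Equiv.Perm.cycleOf_apply_self]; exact hz
    have hone : (f.cycleOf z) ^ n = 1 := (hcyc'.pow_eq_one_iff' hcz).mpr hfix
    have hdvd : p ^ m ∣ n := by
      rw [← hordc]
      exact orderOf_dvd_of_pow_eq_one hone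
    have hn0 : n = 0 := Nat.eq_zero_of_dvd_of_lt hdvd hn_lt
    rw [hn0, pow_zero]
  have fulla : EndConQuord.Full f a := full_of a hfa' ha
  have fullb : EndConQuord.Full f b := full_of b hfb' hb
  constructor
  · -- hard direction : congruence preservation implies quasiorder preservation
    intro H q hq x y hqxy
    obtain ⟨hrefl, htrans, hcomp⟩ := hq
    -- q is stable under all integer powers of f
    have qnat : ∀ (n : ℕ) (u v : A), q u v → q ((f ^ n) u) ((f ^ n) v) := by
      intro n
      induction n with
      | zero => intro u v huv; simpa using huv
      | succ n ih =>
        intro u v huv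
        have e : ∀ w : A, (f ^ (n + 1)) w = f ((f ^ n) w) := by
          intro w; rw [pow_succ', Equiv.Perm.mul_apply]
        rw [e u, e v]
        exact hcomp _ _ (ih u v huv)
    have qzpow : ∀ (k : ℤ) (u v : A), q u v → q ((f ^ k) u) ((f ^ k) v) := by
      intro k u v huv
      set n : ℕ := (k % (orderOf f : ℤ)).toNat with hn
      have hmod_nonneg : 0 ≤ k % (orderOf f : ℤ) :=
        Int.emod_nonneg k (by exact_mod_cast hord_pos.ne')
      have hfi : f ^ k = f ^ n := by
        rw [← zpow_natCast f n, hn, Int.toNat_of_nonneg hmod_nonneg, zpow_mod_orderOf]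
      rw [hfi]
      exact qnat n u v huv
    by_cases hgoal1 : f.SameCycle a (h a)
    · by_cases hgoal2 : f.SameCycle b (h b)
      · obtain ⟨k, hk⟩ := EndConQuord.pow_case H hcyc fulla fullb hgoal1 hgoal2
        rw [hk x, hk y]
        exact qzpow k x y hqxy
      · have hc := EndConQuord.const_case H (fun hh => hcyc hh.symm) fullb fulla hfb' hgoal2
        rw [hc x, hc y]
        exact hrefl _
    · have hc := EndConQuord.const_case H hcyc fulla fullb hfa' hgoal1
      rw [hc x, hc y]
      exact hrefl _
  · -- easy direction : every congruence is a quasiorder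
    intro HQ κ hκ x y hxy
    exact HQ κ.r ⟨fun u => κ.iseqv.refl u, fun _ _ _ h1 h2 => κ.iseqv.trans h1 h2, hκ⟩ x y hxy
end

section
/- Let V be a finite atomistic lattice, a₁ ≠ a₂ atoms of V, and d a coatom of V with a₁ ≰ d and a₂ ≰ d. Then the smallest tolerance of V containing (0, a₁) equals the smallest tolerance containing (0, a₂). -/
/-- A tolerance of a lattice: a reflexive symmetric binary relation compatible
with meet and join. -/
def IsTolerance {V : Type*} [Lattice V] (T : V → V → Prop) : Prop :=
  Reflexive T ∧ Symmetric T ∧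
    (∀ x y u v : V, T x y → T u v → T (x ⊓ u) (y ⊓ v)) ∧
    (∀ x y u v : V, T x y → T u v → T (x ⊔ u) (y ⊔ v))

/-- The least tolerance containing the pair `(x,y)`. -/
def TolGen {V : Type*} [Lattice V] (x y : V) : V → V → Prop :=
  fun u v => ∀ T : V → V → Prop, IsTolerance T → T x y → T u v

/-- A finite lattice is atomistic if every element is a (finite) join of atoms. -/
def Atomistic (V : Type*) [Lattice V] [OrderBot V] : Prop :=
  ∀ v : V, ∃ s : Finset V, (∀ a ∈ s, IsAtom a) ∧ v = s.sup id

theorem tolgen_atoms_eq {V : Type*} [Lattice V] [Fintype V] [BoundedOrder V]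
    (hatomistic : Atomistic V)
    (a₁ a₂ : V) (ha₁ : IsAtom a₁) (ha₂ : IsAtom a₂) (hne : a₁ ≠ a₂)
    (d : V) (hd : IsCoatom d) (h₁ : ¬ a₁ ≤ d) (h₂ : ¬ a₂ ≤ d) :
    TolGen (⊥ : V) a₁ = TolGen (⊥ : V) a₂ := by
  have key : ∀ a : V, IsAtom a → ¬ a ≤ d →
      ∀ T : V → V → Prop, IsTolerance T → (T ⊥ a ↔ T d ⊤) := by
    intro a ha hle T hT
    obtain ⟨hrefl, hsymm, hmeet, hjoin⟩ := hT
    have hinf : a ⊓ d = ⊥ := by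
      rcases (ha.le_iff.mp inf_le_left) with h | h
      · exact h
      · exact absurd (h ▸ inf_le_right) hle
    have hsup : d ⊔ a = ⊤ := hd.2 _ (lt_of_le_of_ne le_sup_left
      (fun h => hle (h ▸ le_sup_right)))
    constructor
    · intro h
      have := hjoin _ _ _ _ (hrefl d) h
      simpa [hsup] using this
    · intro h
      have := hmeet _ _ _ _ (hrefl a) h
      simpa [hinf] using this
  funext u v
  apply propext
  constructor
  · intro H T hT hb
    exact H T hT ((key a₁ ha₁ h₁ T hT).mpr ((key a₂ ha₂ h₂ T hT).mp hb))
  · intro H T hT hb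
    exact H T hT ((key a₂ ha₂ h₂ T hT).mpr ((key a₁ ha₁ h₁ T hT).mp hb))
end

section
/- Let V be a finite atomistic lattice such that T(0, a₁) = T(0, a₂) for all atoms a₁, a₂ of V, and such that T(0,1) being contained in a tolerance T implies T = V × V. Then V is tolerance simple, i.e., its only tolerances are the diagonal and V × V. -/
/-!
If a tolerance `T` relates `x ≠ y`, it relates `x ⊓ y` with `x ⊔ y`; meeting with an atom
`a ≤ x ⊔ y`, `a ≰ x ⊓ y` gives `T ⊥ a`. Since all atoms generate the same tolerance with `⊥`,
`T ⊥ b` for every atom `b`, and joining over the atoms below `⊤` gives `T ⊥ ⊤`. Finally any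
tolerance containing `(⊥, ⊤)` is total: `T x ⊥` and `T ⊥ y` (meets of `(⊤, ⊥)` and `(⊥, ⊤)`
with `x` and `y`) join to `T x y`.
-/

theorem tolGen_self {V : Type*} [Lattice V] (x y : V) : TolGen x y x y :=
  fun _ _ h => h

namespace IsTolerance

variable {V : Type*} [Lattice V] {T : V → V → Prop}

theorem inf_sup_of_rel (hT : IsTolerance T) {x y : V} (h : T x y) : T (x ⊓ y) (x ⊔ y) := by
  obtain ⟨hrefl, hsymm, hinf, hsup⟩ := hT
  have hx : T (x ⊓ y) x := by simpa [inf_comm] using hinf y x x x (hsymm h) (hrefl x)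
  have hy : T (x ⊓ y) y := by simpa using hinf x y y y h (hrefl y)
  simpa using hsup _ _ _ _ hx hy

theorem finset_sup {ι : Type*} [OrderBot V] (hT : IsTolerance T) (s : Finset ι) {f g : ι → V}
    (h : ∀ i ∈ s, T (f i) (g i)) : T (s.sup f) (s.sup g) := by
  classical
  induction s using Finset.induction_on with
  | empty => exact hT.1 ⊥
  | insert i s _ ih =>
    simp only [Finset.sup_insert]
    exact hT.2.2.2 _ _ _ _ (h i (s.mem_insert_self i))
      (ih fun j hj => h j (Finset.mem_insert_of_mem hj))

theorem rel_of_tolGen (hT : IsTolerance T) {x y u v : V} (hxy : T x y) (h : TolGen x y u v) :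
    T u v :=
  h T hT hxy

theorem rel_of_rel_bot_top [BoundedOrder V] (hT : IsTolerance T) (h : T ⊥ ⊤) (x y : V) :
    T x y := by
  obtain ⟨hrefl, hsymm, hinf, hsup⟩ := hT
  have hx : T x ⊥ := by simpa using hinf ⊤ ⊥ x x (hsymm h) (hrefl x)
  have hy : T ⊥ y := by simpa using hinf ⊥ ⊤ y y h (hrefl y)
  simpa using hsup _ _ _ _ hx hy

end IsTolerance

section Atomistic

variable {V : Type*} [Lattice V] [OrderBot V]

theorem Atomistic.exists_atom_le_not_le (hV : Atomistic V) {x y : V} (h : ¬ y ≤ x) :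
    ∃ a, IsAtom a ∧ a ≤ y ∧ ¬ a ≤ x := by
  obtain ⟨s, hs, rfl⟩ := hV y
  by_contra! hle
  exact h (Finset.sup_le fun a ha => hle a (hs a ha) (Finset.le_sup (f := id) ha))

theorem IsTolerance.exists_atom_rel_bot (hV : Atomistic V) {T : V → V → Prop}
    (hT : IsTolerance T) {x y : V} (hxy : T x y) (hne : x ≠ y) : ∃ a, IsAtom a ∧ T ⊥ a := by
  obtain ⟨a, ha, haxy, hnle⟩ := hV.exists_atom_le_not_le (inf_lt_sup.mpr hne).not_ge
  have hdisj : x ⊓ y ⊓ a = ⊥ := ((ha.not_le_iff_disjoint.mp hnle).symm).eq_bot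
  have hmeet := hT.2.2.1 _ _ _ _ (hT.inf_sup_of_rel hxy) (hT.1 a)
  rw [hdisj, inf_eq_right.mpr haxy] at hmeet
  exact ⟨a, ha, hmeet⟩

end Atomistic

theorem Atomistic.rel_bot_top {V : Type*} [Lattice V] [BoundedOrder V] (hV : Atomistic V)
    {T : V → V → Prop} (hT : IsTolerance T) (h : ∀ a, IsAtom a → T ⊥ a) : T ⊥ ⊤ := by
  obtain ⟨s, hs, hs_top⟩ := hV ⊤
  rw [hs_top, ← Finset.sup_bot (α := V) s]
  exact hT.finset_sup s fun a ha => h a (hs a ha)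

theorem tolerance_simple_of_tolgen_atoms_eq_general
    {V : Type*} [Lattice V] [BoundedOrder V]
    (hatomistic : Atomistic V)
    (hatoms : ∀ a₁ a₂ : V, IsAtom a₁ → IsAtom a₂ →
      TolGen (⊥ : V) a₁ = TolGen (⊥ : V) a₂) :
    ∀ T : V → V → Prop, IsTolerance T →
      (T = fun x y => x = y) ∨ (∀ x y : V, T x y) := by
  intro T hT
  by_cases hdiag : ∀ x y : V, T x y → x = y
  · left
    funext x y
    exact propext ⟨hdiag x y, fun e => e ▸ hT.1 x⟩
  · right
    push Not at hdiag
    obtain ⟨x, y, hxy, hne⟩ := hdiag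
    obtain ⟨a, ha, hTa⟩ := hT.exists_atom_rel_bot hatomistic hxy hne
    have hatoms_rel : ∀ b, IsAtom b → T ⊥ b := fun b hb =>
      hT.rel_of_tolGen hTa (by rw [hatoms a b ha hb]; exact tolGen_self ⊥ b)
    exact hT.rel_of_rel_bot_top (hatomistic.rel_bot_top hT hatoms_rel)

theorem tolerance_simple_of_tolgen_atoms_eq
    {V : Type*} [Lattice V] [Fintype V] [BoundedOrder V]
    (hatomistic : Atomistic V)
    (hatoms : ∀ a₁ a₂ : V, IsAtom a₁ → IsAtom a₂ →
      TolGen (⊥ : V) a₁ = TolGen (⊥ : V) a₂)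
    (hfull : ∀ T : V → V → Prop, IsTolerance T → T ⊥ ⊤ → ∀ x y : V, T x y) :
    ∀ T : V → V → Prop, IsTolerance T →
      (T = fun x y => x = y) ∨ (∀ x y : V, T x y) :=
  tolerance_simple_of_tolgen_atoms_eq_general hatomistic hatoms
end

section
/- Let A be a finite set with |A| ≥ 3. For any equivalence relation κ on A with Δ ⊊ κ ⊊ ∇ there exist distinct a, b ∈ A with (a,b) ∈ κ and a function f : A → A of type I (f nontrivial, f² = f) such that f preserves neither κ nor the equivalence [a,b] with single nontrivial block {a,b}. -/
/-- `f` preserves the binary relation `r`. -/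
def PreservesRel {A : Type*} (f : A → A) (r : A → A → Prop) : Prop :=
  ∀ x y : A, r x y → r (f x) (f y)

/-- The equivalence relation `[a,b]` with single nontrivial block `{a,b}`. -/
def pairRel {A : Type*} (a b : A) : A → A → Prop :=
  fun u v => u = v ∨ ((u = a ∨ u = b) ∧ (v = a ∨ v = b))

theorem exists_typeI_killing_atom {A : Type*} [Fintype A]
    (hA : 3 ≤ Fintype.card A) (κ : Setoid A) (hbot : κ ≠ ⊥) (htop : κ ≠ ⊤) :
    ∃ (a b : A) (f : A → A), a ≠ b ∧ κ.r a b ∧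
      Nontriv f ∧ f ∘ f = f ∧
      ¬ PreservesRel f κ.r ∧ ¬ PreservesRel f (pairRel a b) := by
  classical
  -- find a ≠ b with κ a b
  obtain ⟨a, b, hab, hne⟩ : ∃ a b, κ.r a b ∧ a ≠ b := by
    by_contra h
    push_neg at h
    apply hbot
    apply Setoid.ext
    intro x y
    constructor
    · exact fun hxy => h x y hxy
    · rintro rfl; exact κ.refl x
  -- find u v with ¬ κ u v
  obtain ⟨u, v, huv⟩ : ∃ u v, ¬ κ.r u v := by
    by_contra h
    push_neg at h
    exact htop (Setoid.ext fun x y => ⟨fun _ => trivial, fun _ => h x y⟩)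
  -- find c with ¬ κ a c
  obtain ⟨c, hac⟩ : ∃ c, ¬ κ.r a c := by
    by_cases h : κ.r a u
    · exact ⟨v, fun hav => huv (κ.trans (κ.symm h) hav)⟩
    · exact ⟨u, h⟩
  have hbc : b ≠ c := fun h => hac (h ▸ hab)
  have hac' : a ≠ c := fun h => hac (h ▸ κ.refl a)
  refine ⟨a, b, fun x => if x = b then c else x, hne, hab, ?_, ?_, ?_, ?_⟩
  · constructor
    · intro h
      have := congrFun h b
      simp at this
      exact hbc this.symm
    · intro d h
      have h1 := congrFun h a
      have h2 := congrFun h c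
      simp only [if_neg hne, if_neg (fun hh : c = b => hbc hh.symm)] at h1 h2
      exact hac' (h1.trans h2.symm)
  · funext x
    by_cases hx : x = b
    · simp [hx, if_neg (fun hh : c = b => hbc hh.symm)]
    · simp [hx]
  · intro hp
    have := hp a b hab
    simp only [if_neg hne, if_pos rfl] at this
    exact hac this
  · intro hp
    have := hp a b (Or.inr ⟨Or.inl rfl, Or.inr rfl⟩)
    simp only [if_neg hne, if_pos rfl] at this
    rcases this with h | ⟨_, h | h⟩
    · exact hac' h
    · exact hac' h.symm
    · exact hbc h.symm
end
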